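/- arXiv:1708.00732 — 3 statements merged into one kernel-verified Lean document; each statement's English description precedes it below -/
import Mathlib

section
/- Let x: [0,∞) → ℝ be càdlàg, ε > 0 and t ≥ 0. Then TTV(x,[0,t],ε) = UTV(x,[0,t],ε) + DTV(x,[0,t],ε). -/
open MeasureTheory Filter Topology Set
open scoped Classical

noncomputable section

/-- The jump `Δf_s = f s - f (s-)` of a path at a point. -/
def jmp (f : ℝ → ℝ) (s : ℝ) : ℝ := f s - Function.leftLim f s

/-- A path `f : ℝ → ℝ` (thought of as a path on `[0,∞)`) is càdlàg: right-continuous at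
every `t ≥ 0` and with finite left limits at every `t > 0`. -/
def Cadlag (f : ℝ → ℝ) : Prop :=
  (∀ t : ℝ, 0 ≤ t → ContinuousWithinAt f (Ici t) t) ∧
    ∀ t : ℝ, 0 < t → Tendsto f (𝓝[<] t) (𝓝 (Function.leftLim f t))

/-- `p = (u, v)` is a decomposition of `y` on `[0,∞)` as a difference of two nondecreasing
right-continuous functions. -/
def IsBVDecompOn (y : ℝ → ℝ) (p : StieltjesFunction ℝ × StieltjesFunction ℝ) : Prop :=
  ∀ s : ℝ, 0 ≤ s → y s = p.1 s - p.2 s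

/-- `y` has locally finite total variation on `[0,∞)`: for right-continuous `y` with left
limits this is equivalent to admitting a Jordan decomposition `y = u - v` with `u, v`
nondecreasing and right-continuous. -/
def LocBV (y : ℝ → ℝ) : Prop := ∃ p, IsBVDecompOn y p

/-- The Lebesgue–Stieltjes integral `∫_{(0,t]} g dy` of `g` with respect to the signed
Lebesgue–Stieltjes measure `μ_u - μ_v`, where `y = u - v` with `u, v` nondecreasing and
right-continuous.  (For integrable `g` its value does not depend on the choice of the
decomposition.) -/
def lsInt (y g : ℝ → ℝ) (t : ℝ) : ℝ :=
  if h : ∃ p, IsBVDecompOn y p then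
    (∫ s in Ioc (0:ℝ) t, g s ∂(h.choose.1.measure)) -
      ∫ s in Ioc (0:ℝ) t, g s ∂(h.choose.2.measure)
  else 0

/-- The integral `∫_{(0,t]} |g| |dy|` of `|g|` with respect to the total variation measure of
the signed Lebesgue–Stieltjes measure of `y`; it is computed from a minimal (mutually
singular on `(0,∞)`) decomposition of `y`, for which the total variation measure is
`μ_u + μ_v`. -/
def lsAbs (y g : ℝ → ℝ) (t : ℝ) : ℝ :=
  if h : ∃ p, IsBVDecompOn y p ∧
      (p.1.measure.restrict (Ioi 0)).MutuallySingular (p.2.measure.restrict (Ioi 0)) then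
    ∫ s in Ioc (0:ℝ) t, |g s| ∂(h.choose.1.measure + h.choose.2.measure)
  else 0

/-- The truncated variation of `x` on `[a,b]` with truncation parameter `ε`. -/
def TTV (x : ℝ → ℝ) (a b ε : ℝ) : ℝ :=
  sSup {v : ℝ | ∃ (n : ℕ) (t : ℕ → ℝ), a ≤ t 0 ∧ t n ≤ b ∧ (∀ i, i < n → t i < t (i + 1)) ∧
    v = ∑ i ∈ Finset.range n, max (|x (t (i + 1)) - x (t i)| - ε) 0}

/-- The upward truncated variation of `x` on `[a,b]` with truncation parameter `ε`. -/
def UTV (x : ℝ → ℝ) (a b ε : ℝ) : ℝ :=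
  sSup {v : ℝ | ∃ (n : ℕ) (t : ℕ → ℝ), a ≤ t 0 ∧ t n ≤ b ∧ (∀ i, i < n → t i < t (i + 1)) ∧
    v = ∑ i ∈ Finset.range n, max (x (t (i + 1)) - x (t i) - ε) 0}

/-- The downward truncated variation of `x` on `[a,b]` with truncation parameter `ε`. -/
def DTV (x : ℝ → ℝ) (a b ε : ℝ) : ℝ :=
  sSup {v : ℝ | ∃ (n : ℕ) (t : ℕ → ℝ), a ≤ t 0 ∧ t n ≤ b ∧ (∀ i, i < n → t i < t (i + 1)) ∧
    v = ∑ i ∈ Finset.range n, max (x (t i) - x (t (i + 1)) - ε) 0}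

/-- The standing assumptions: `x` is càdlàg with `Σ_{0<s≤t} (Δx_s)² < ∞` for all `t > 0`;
`𝒳 = (xe ε)_{ε>0}` is a family of càdlàg paths of locally finite total variation with
`sup_{s ≥ 0} |x s - xe ε s| ≤ ε`; `q = ⟨x⟩` is the uniform-on-compacts limit of
`2 ∫_{(0,·]} (x - xe ε) d(xe ε)` as `ε → 0+`;
`sup_{ε>0} ∫_{(0,t]} |x - xe ε| |d(xe ε)| < ∞` for every `t > 0`; and there is a constant
`K` with `|Δ(xe ε)_s| ≤ K |Δx_s|` for all `s > 0` and `ε > 0`. -/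
structure StandingAssumptions (x : ℝ → ℝ) (xe : ℝ → ℝ → ℝ) (q : ℝ → ℝ) : Prop where
  cadlag_x : Cadlag x
  jumps_sq_summable : ∀ t : ℝ, 0 < t → Summable fun s : Ioc (0:ℝ) t => jmp x (s : ℝ) ^ 2
  cadlag_xe : ∀ ε : ℝ, 0 < ε → Cadlag (xe ε)
  bv_xe : ∀ ε : ℝ, 0 < ε → LocBV (xe ε)
  approx : ∀ ε : ℝ, 0 < ε → ∀ s : ℝ, 0 ≤ s → |x s - xe ε s| ≤ ε
  qv_unif : ∀ T : ℝ, 0 ≤ T →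
    TendstoUniformlyOn (fun ε s => 2 * lsInt (xe ε) (fun r => x r - xe ε r) s) q
      (𝓝[>] 0) (Icc 0 T)
  bdd : ∀ t : ℝ, 0 < t → ∃ C : ℝ, ∀ ε : ℝ, 0 < ε →
    lsAbs (xe ε) (fun r => x r - xe ε r) t ≤ C
  jump_bdd : ∃ K : ℝ, ∀ ε : ℝ, 0 < ε → ∀ s : ℝ, 0 < s → |jmp (xe ε) s| ≤ K * |jmp x s|


/-!
Splitting every truncated increment into its upward and downward parts gives
`TTV ≤ UTV + DTV`. Conversely, a partition for `UTV` and one for `DTV` can be merged, by recursion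
on their total number of points, into a single partition whose truncated variation dominates the
sum of the two. Look at the first upward step `a → b` and the first downward step `c → d`, say
with `a ≤ c`: if `a → b` ends before `c → d` starts, it is kept; otherwise one of the two steps
can be moved to end or start at an endpoint of the other without loss, or `c → d` lies inside
`a → b` and either gains nothing or the walk `a → c → d → b` gains at least as much as the two
steps. For a càdlàg path all these suprema are finite: `[0, t]` splits into finitely many cells
on which `x` oscillates by at most `ε / 2`, so only the boundedly many steps that change cell
gain anything.
-/

open Pointwise

section ChainSum

variable {α : Type*} (g : α → α → ℝ)

def chainSum : List α → ℝ
  | a :: b :: l => g a b + chainSum (b :: l)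
  | _ => 0

@[simp] lemma chainSum_nil : chainSum g [] = 0 := rfl

@[simp] lemma chainSum_singleton (a : α) : chainSum g [a] = 0 := rfl

@[simp] lemma chainSum_cons_cons (a b : α) (l : List α) :
    chainSum g (a :: b :: l) = g a b + chainSum g (b :: l) := rfl

variable {g}

lemma chainSum_mono {g' : α → α → ℝ} (h : ∀ a b, g a b ≤ g' a b) :
    ∀ l : List α, chainSum g l ≤ chainSum g' l
  | [] => le_rfl
  | [_] => le_rfl
  | a :: b :: l => by simpa using add_le_add (h a b) (chainSum_mono h (b :: l))

lemma chainSum_le_chainSum_cons (hg : ∀ a b, 0 ≤ g a b) (a : α) :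
    ∀ l : List α, chainSum g l ≤ chainSum g (a :: l)
  | [] => le_rfl
  | b :: l => by simpa using hg a b

lemma chainSum_add_chainSum_le_append (hg : ∀ a b, 0 ≤ g a b) :
    ∀ p l : List α, chainSum g p + chainSum g l ≤ chainSum g (p ++ l)
  | [], _ => by simp
  | [a], l => by simpa using chainSum_le_chainSum_cons hg a l
  | a :: b :: p, l => by
    simpa [add_assoc] using chainSum_add_chainSum_le_append hg (b :: p) l

lemma chainSum_map_range (t : ℕ → α) (n : ℕ) :
    chainSum g ((List.range (n + 1)).map t) = ∑ i ∈ Finset.range n, g (t i) (t (i + 1)) := by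
  induction n generalizing t with
  | zero => simp
  | succ n ih =>
    have h := ih (fun i => t (i + 1))
    rw [List.range_succ_eq_map (n := n)] at h
    rw [Finset.sum_range_succ', ← h, List.range_succ_eq_map (n := n + 1), List.range_succ_eq_map]
    simp only [List.map_cons, List.map_map, chainSum_cons_cons, add_comm]
    rfl

end ChainSum

section Increments

variable (f : ℝ → ℝ) (ε : ℝ)

def truncIncr (a b : ℝ) : ℝ := max (|f b - f a| - ε) 0

def truncUpIncr (a b : ℝ) : ℝ := max (f b - f a - ε) 0

def truncDownIncr (a b : ℝ) : ℝ := max (f a - f b - ε) 0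

variable {f ε}

lemma truncIncr_nonneg (a b : ℝ) : 0 ≤ truncIncr f ε a b := le_max_right _ _

lemma truncUpIncr_nonneg (a b : ℝ) : 0 ≤ truncUpIncr f ε a b := le_max_right _ _

lemma truncUpIncr_le_truncIncr (a b : ℝ) : truncUpIncr f ε a b ≤ truncIncr f ε a b :=
  max_le_max_right _ (sub_le_sub_right (le_abs_self _) _)

lemma truncDownIncr_le_truncIncr (a b : ℝ) : truncDownIncr f ε a b ≤ truncIncr f ε a b :=
  max_le_max_right _ (sub_le_sub_right (abs_sub_comm (f b) (f a) ▸ le_abs_self _) _)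

lemma truncIncr_self (hε : 0 ≤ ε) (a : ℝ) : truncIncr f ε a a = 0 := by
  simp [truncIncr, hε]

lemma truncIncr_eq_truncUpIncr_add_truncDownIncr (hε : 0 ≤ ε) (a b : ℝ) :
    truncIncr f ε a b = truncUpIncr f ε a b + truncDownIncr f ε a b := by
  unfold truncIncr truncUpIncr truncDownIncr
  rcases le_total (f a) (f b) with h | h
  · rw [abs_of_nonneg (sub_nonneg.2 h), max_eq_right (by linarith : f a - f b - ε ≤ 0), add_zero]
  · rw [abs_of_nonpos (sub_nonpos.2 h), max_eq_right (by linarith : f b - f a - ε ≤ 0),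
      zero_add, neg_sub]

variable (f ε)

lemma truncIncr_neg : truncIncr (-f) ε = truncIncr f ε := by
  ext a b; simp [truncIncr, neg_add_eq_sub, abs_sub_comm]

lemma truncUpIncr_neg : truncUpIncr (-f) ε = truncDownIncr f ε := by
  ext a b; simp [truncUpIncr, truncDownIncr, neg_add_eq_sub]

lemma truncDownIncr_neg : truncDownIncr (-f) ε = truncUpIncr f ε := by
  rw [← truncUpIncr_neg, neg_neg]

end Increments

section Merge

variable (f : ℝ → ℝ) (ε : ℝ)

def HasDominatingChain (π₁ π₂ : List ℝ) : Prop :=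
  ∃ c : List ℝ, c.Pairwise (· ≤ ·) ∧ c ⊆ π₁ ++ π₂ ∧
    chainSum (truncUpIncr f ε) π₁ + chainSum (truncDownIncr f ε) π₂ ≤
      chainSum (truncIncr f ε) c

variable {f ε}

lemma HasDominatingChain.swap {π₁ π₂ : List ℝ} (h : HasDominatingChain (-f) ε π₂ π₁) :
    HasDominatingChain f ε π₁ π₂ := by
  obtain ⟨c, hc, hsub, hval⟩ := h
  rw [truncUpIncr_neg, truncDownIncr_neg, truncIncr_neg, add_comm] at hval
  exact ⟨c, hc, fun z hz => by simpa [or_comm] using hsub hz, hval⟩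

lemma hasDominatingChain_of_length_le_one {π₁ π₂ : List ℝ} (h₁ : π₁.Pairwise (· ≤ ·))
    (h₂ : π₂.Pairwise (· ≤ ·)) (h : π₁.length ≤ 1 ∨ π₂.length ≤ 1) :
    HasDominatingChain f ε π₁ π₂ := by
  have hzero : ∀ g : ℝ → ℝ → ℝ, ∀ l : List ℝ, l.length ≤ 1 → chainSum g l = 0 := by
    rintro g (_ | ⟨_, _ | _⟩) hl <;> simp_all
  rcases h with h | h
  · exact ⟨π₂, h₂, List.subset_append_right _ _, by
      simpa [hzero _ _ h] using chainSum_mono truncDownIncr_le_truncIncr π₂⟩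
  · exact ⟨π₁, h₁, List.subset_append_left _ _, by
      simpa [hzero _ _ h] using chainSum_mono truncUpIncr_le_truncIncr π₁⟩

lemma HasDominatingChain.prepend {π₁ π₂ ρ₁ ρ₂ p : List ℝ} {m : ℝ}
    (h : HasDominatingChain f ε ρ₁ ρ₂)
    (hρ : ∀ z ∈ ρ₁ ++ ρ₂, m ≤ z ∧ z ∈ π₁ ++ π₂)
    (hp : p.Pairwise (· ≤ ·)) (hpm : ∀ z ∈ p, z ≤ m ∧ z ∈ π₁ ++ π₂)
    (hval : chainSum (truncUpIncr f ε) π₁ + chainSum (truncDownIncr f ε) π₂ ≤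
      chainSum (truncIncr f ε) p +
        (chainSum (truncUpIncr f ε) ρ₁ + chainSum (truncDownIncr f ε) ρ₂)) :
    HasDominatingChain f ε π₁ π₂ := by
  obtain ⟨c, hc, hsub, hcval⟩ := h
  refine ⟨p ++ c, List.pairwise_append.2 ⟨hp, hc, fun y hy z hz => ?_⟩, ?_, ?_⟩
  · exact (hpm y hy).1.trans (hρ z (hsub hz)).1
  · intro z hz
    rcases List.mem_append.1 hz with hz | hz
    exacts [(hpm z hz).2, (hρ z (hsub hz)).2]
  · exact hval.trans ((add_le_add le_rfl hcval).trans
      (chainSum_add_chainSum_le_append truncIncr_nonneg p c))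

lemma truncUpIncr_le_of_le {a b c : ℝ} (h : f b ≤ f c) :
    truncUpIncr f ε a b ≤ truncUpIncr f ε a c :=
  max_le_max_right _ (by linarith)

lemma truncDownIncr_le_of_le {b c d : ℝ} (h : f c ≤ f b) :
    truncDownIncr f ε c d ≤ truncDownIncr f ε b d :=
  max_le_max_right _ (by linarith)

lemma truncUpIncr_add_truncDownIncr_le {a b c d : ℝ} (hcd : ε < f c - f d) :
    truncUpIncr f ε a b + truncDownIncr f ε c d ≤
      truncIncr f ε a c + truncIncr f ε c d + truncUpIncr f ε d b := by
  have hac : f c - f a - ε ≤ truncIncr f ε a c :=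
    (sub_le_sub_right (le_abs_self _) _).trans (le_max_left _ _)
  have hdb : f b - f d - ε ≤ truncUpIncr f ε d b := le_max_left _ _
  have hdown : truncDownIncr f ε c d = f c - f d - ε := max_eq_left (by linarith)
  have := truncDownIncr_le_truncIncr (f := f) (ε := ε) c d
  have := truncIncr_nonneg (f := f) (ε := ε) a c
  have := truncUpIncr_nonneg (f := f) (ε := ε) d b
  have hab : truncUpIncr f ε a b = f b - f a - ε ∨ truncUpIncr f ε a b = 0 := max_choice _ _
  rcases hab with hab | hab <;> linarith

lemma hasDominatingChain_cons_cons {a b c d : ℝ} {r₁ r₂ : List ℝ} (hac : a ≤ c)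
    (h₁ : (a :: b :: r₁).Pairwise (· ≤ ·)) (h₂ : (c :: d :: r₂).Pairwise (· ≤ ·))
    (ih : ∀ ρ₁ ρ₂ : List ℝ, ρ₁.length + ρ₂.length < r₁.length + r₂.length + 4 →
      ρ₁.Pairwise (· ≤ ·) → ρ₂.Pairwise (· ≤ ·) → HasDominatingChain f ε ρ₁ ρ₂) :
    HasDominatingChain f ε (a :: b :: r₁) (c :: d :: r₂) := by
  obtain ⟨⟨hab, -⟩, hbr, hr₁⟩ : (a ≤ b ∧ ∀ z ∈ r₁, a ≤ z) ∧ (∀ z ∈ r₁, b ≤ z) ∧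
      r₁.Pairwise (· ≤ ·) := by simpa using h₁
  obtain ⟨⟨hcd, -⟩, hdr, hr₂⟩ : (c ≤ d ∧ ∀ z ∈ r₂, c ≤ z) ∧ (∀ z ∈ r₂, d ≤ z) ∧
      r₂.Pairwise (· ≤ ·) := by simpa using h₂
  have hbr₁ := List.pairwise_cons.2 ⟨hbr, hr₁⟩
  have hdr₂ := List.pairwise_cons.2 ⟨hdr, hr₂⟩
  have hU := truncUpIncr_le_truncIncr (f := f) (ε := ε)
  rcases le_total b c with hbc | hcb
  -- `a → b` ends before `c → d` starts
  · refine (ih (b :: r₁) (c :: d :: r₂) (by simp only [List.length_cons]; omega) hbr₁ h₂).prepend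
      (m := b) (p := [a, b]) ?_ (by simpa using hab) ?_ ?_
    · grind
    · grind
    · simp only [chainSum_cons_cons, chainSum_singleton]; linarith [hU a b]
  rcases le_total (f b) (f c) with hfbc | hfcb
  -- the upward step gains at least as much when it ends at `c`
  · refine (ih (b :: r₁) (c :: d :: r₂) (by simp only [List.length_cons]; omega) hbr₁ h₂).prepend
      (m := c) (p := [a, c]) ?_ (by simpa using hac) ?_ ?_
    · grind
    · grind
    · simp only [chainSum_cons_cons, chainSum_singleton]
      linarith [hU a c, truncUpIncr_le_of_le (ε := ε) (a := a) hfbc]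
  rcases le_total b d with hbd | hdb
  -- the steps cross, and the downward one gains at least as much when it starts at `b`
  · refine (ih (b :: r₁) (b :: d :: r₂) (by simp only [List.length_cons]; omega) hbr₁
      (List.pairwise_cons.2 ⟨List.forall_mem_cons.2 ⟨hbd, fun z hz => hbd.trans (hdr z hz)⟩,
        h₂.of_cons⟩)).prepend
      (m := b) (p := [a, b]) ?_ (by simpa using hab) ?_ ?_
    · grind
    · grind
    · simp only [chainSum_cons_cons, chainSum_singleton]
      linarith [hU a b, truncDownIncr_le_of_le (ε := ε) (d := d) hfcb]
  -- from here on `c → d` lies inside `a → b`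
  rcases le_or_gt (f c - f d) ε with hgain | hgain
  · refine (ih (a :: b :: r₁) (d :: r₂) (by simp only [List.length_cons]; omega) h₁ hdr₂).prepend
      (m := a) (p := []) ?_ (by simp) (by simp) ?_
    · grind
    · have : truncDownIncr f ε c d = 0 := max_eq_right (by linarith)
      simp only [chainSum_cons_cons, chainSum_nil, this]; linarith
  · refine (ih (d :: b :: r₁) (d :: r₂) (by simp only [List.length_cons]; omega)
      (List.pairwise_cons.2 ⟨List.forall_mem_cons.2 ⟨hdb, fun z hz => hdb.trans (hbr z hz)⟩,
        h₁.of_cons⟩) hdr₂).prepend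
      (m := d) (p := [a, c, d]) ?_ (by simpa using ⟨⟨hac, hac.trans hcd⟩, hcd⟩) ?_ ?_
    · grind
    · grind
    · simp only [chainSum_cons_cons, chainSum_singleton]
      linarith [truncUpIncr_add_truncDownIncr_le (a := a) (b := b) hgain]

theorem hasDominatingChain (f : ℝ → ℝ) (ε : ℝ) (π₁ π₂ : List ℝ) (h₁ : π₁.Pairwise (· ≤ ·))
    (h₂ : π₂.Pairwise (· ≤ ·)) : HasDominatingChain f ε π₁ π₂ := by
  induction hn : π₁.length + π₂.length using Nat.strong_induction_on generalizing f π₁ π₂ with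
  | _ n ih =>
  by_cases hshort : π₁.length ≤ 1 ∨ π₂.length ≤ 1
  · exact hasDominatingChain_of_length_le_one h₁ h₂ hshort
  obtain ⟨a, b, r₁, rfl⟩ : ∃ a b r₁, π₁ = a :: b :: r₁ := by
    rcases π₁ with _ | ⟨a, _ | ⟨b, r₁⟩⟩ <;> simp_all
  obtain ⟨c, d, r₂, rfl⟩ : ∃ c d r₂, π₂ = c :: d :: r₂ := by
    rcases π₂ with _ | ⟨c, _ | ⟨d, r₂⟩⟩ <;> simp_all
  rcases le_total a c with hac | hca
  · exact hasDominatingChain_cons_cons hac h₁ h₂ fun ρ₁ ρ₂ hρ hρ₁ hρ₂ =>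
      ih _ (by simp at hn; omega) f ρ₁ ρ₂ hρ₁ hρ₂ rfl
  · exact (hasDominatingChain_cons_cons hca h₂ h₁ fun ρ₁ ρ₂ hρ hρ₁ hρ₂ =>
      ih _ (by simp at hn; omega) (-f) ρ₁ ρ₂ hρ₁ hρ₂ rfl).swap

end Merge

section PartitionSums

def partitionSums (g : ℝ → ℝ → ℝ) (a b : ℝ) : Set ℝ :=
  {v | ∃ (n : ℕ) (t : ℕ → ℝ), a ≤ t 0 ∧ t n ≤ b ∧ (∀ i, i < n → t i < t (i + 1)) ∧
    v = ∑ i ∈ Finset.range n, g (t i) (t (i + 1))}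

lemma TTV_eq_sSup (x : ℝ → ℝ) (a b ε : ℝ) :
    TTV x a b ε = sSup (partitionSums (truncIncr x ε) a b) := rfl

lemma UTV_eq_sSup (x : ℝ → ℝ) (a b ε : ℝ) :
    UTV x a b ε = sSup (partitionSums (truncUpIncr x ε) a b) := rfl

lemma DTV_eq_sSup (x : ℝ → ℝ) (a b ε : ℝ) :
    DTV x a b ε = sSup (partitionSums (truncDownIncr x ε) a b) := rfl

variable {g : ℝ → ℝ → ℝ} {a b : ℝ}

lemma zero_mem_partitionSums (hab : a ≤ b) : (0 : ℝ) ∈ partitionSums g a b :=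
  ⟨0, fun _ => a, le_rfl, hab, by simp, by simp⟩

lemma mem_Icc_of_partition {n : ℕ} {t : ℕ → ℝ} (h0 : a ≤ t 0) (hn : t n ≤ b)
    (ht : ∀ i, i < n → t i < t (i + 1)) {i : ℕ} (hi : i ≤ n) : t i ∈ Icc a b :=
  have hmono := (strictMonoOn_Iic_of_lt_succ ht).monotoneOn
  ⟨h0.trans (hmono (mem_Iic.2 (Nat.zero_le n)) (mem_Iic.2 hi) (Nat.zero_le i)),
    (hmono (mem_Iic.2 hi) (mem_Iic.2 le_rfl) hi).trans hn⟩

lemma exists_list_of_mem_partitionSums {v : ℝ} (hv : v ∈ partitionSums g a b) :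
    ∃ l : List ℝ, l.Pairwise (· ≤ ·) ∧ (∀ z ∈ l, z ∈ Icc a b) ∧ v = chainSum g l := by
  obtain ⟨n, t, h0, hn, ht, rfl⟩ := hv
  have hmono := (strictMonoOn_Iic_of_lt_succ ht).monotoneOn
  refine ⟨(List.range (n + 1)).map t, ?_, ?_, (chainSum_map_range t n).symm⟩
  · refine List.pairwise_map.2 (List.pairwise_lt_range.imp_of_mem fun hi hj hij => ?_)
    exact hmono (by simpa [Nat.lt_succ_iff] using hi) (by simpa [Nat.lt_succ_iff] using hj) hij.le
  · simp only [List.mem_map, List.mem_range, forall_exists_index, and_imp]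
    rintro _ i hi rfl
    exact mem_Icc_of_partition h0 hn ht (Nat.lt_succ_iff.1 hi)

lemma exists_partition_of_chain (hg : ∀ z, g z z = 0) :
    ∀ (z : ℝ) (l : List ℝ), (z :: l).Pairwise (· ≤ ·) → (∀ w ∈ z :: l, w ≤ b) →
      ∃ (n : ℕ) (t : ℕ → ℝ), t 0 = z ∧ t n ≤ b ∧ (∀ i, i < n → t i < t (i + 1)) ∧
        chainSum g (z :: l) = ∑ i ∈ Finset.range n, g (t i) (t (i + 1))
  | z, [], _, hb => ⟨0, fun _ => z, rfl, hb z (by simp), by simp, by simp⟩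
  | z, y :: l, hl, hb => by
    obtain ⟨n, t, ht0, htn, ht, hsum⟩ := exists_partition_of_chain hg y l hl.of_cons
      (fun w hw => hb w (List.mem_cons_of_mem _ hw))
    rcases (List.rel_of_pairwise_cons hl (List.mem_cons_self ..)).lt_or_eq with hzy | rfl
    · refine ⟨n + 1, fun i => if i = 0 then z else t (i - 1), rfl, by simpa using htn, ?_, ?_⟩
      · rintro (_ | i) hi
        · simpa [ht0] using hzy
        · simpa using ht i (by omega)
      · rw [Finset.sum_range_succ', chainSum_cons_cons, hsum, add_comm]
        simp [ht0]
    · exact ⟨n, t, ht0, htn, ht, by simp [hg, hsum]⟩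

lemma exists_mem_partitionSums_of_chain (hg : ∀ z, g z z = 0) (hab : a ≤ b) {l : List ℝ}
    (hl : l.Pairwise (· ≤ ·)) (hlab : ∀ z ∈ l, z ∈ Icc a b) :
    chainSum g l ∈ partitionSums g a b := by
  rcases l with _ | ⟨z, l⟩
  · exact zero_mem_partitionSums hab
  · obtain ⟨n, t, ht0, htn, ht, hsum⟩ :=
      exists_partition_of_chain hg z l hl fun w hw => (hlab w hw).2
    exact ⟨n, t, ht0 ▸ (hlab z (by simp)).1, htn, ht, hsum⟩

end PartitionSums

theorem TTV_eq_UTV_add_DTV_of_bddAbove {x : ℝ → ℝ} {a b ε : ℝ} (hε : 0 ≤ ε) (hab : a ≤ b)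
    (hbdd : BddAbove (partitionSums (truncIncr x ε) a b)) :
    TTV x a b ε = UTV x a b ε + DTV x a b ε := by
  rw [TTV_eq_sSup, UTV_eq_sSup, DTV_eq_sSup]
  set T := partitionSums (truncIncr x ε) a b
  set U := partitionSums (truncUpIncr x ε) a b
  set D := partitionSums (truncDownIncr x ε) a b
  have hsplit : ∀ v ∈ T, v ∈ U + D := by
    rintro _ ⟨n, t, h0, hn, ht, rfl⟩
    refine ⟨_, ⟨n, t, h0, hn, ht, rfl⟩, _, ⟨n, t, h0, hn, ht, rfl⟩, ?_⟩
    show _ + _ = _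
    rw [← Finset.sum_add_distrib]
    exact Finset.sum_congr rfl fun i _ => (truncIncr_eq_truncUpIncr_add_truncDownIncr hε _ _).symm
  have hmerge : ∀ u ∈ U, ∀ d ∈ D, ∃ v ∈ T, u + d ≤ v := by
    intro u hu d hd
    obtain ⟨π₁, hπ₁, hπ₁ab, rfl⟩ := exists_list_of_mem_partitionSums hu
    obtain ⟨π₂, hπ₂, hπ₂ab, rfl⟩ := exists_list_of_mem_partitionSums hd
    obtain ⟨c, hc, hcπ, hval⟩ := hasDominatingChain x ε π₁ π₂ hπ₁ hπ₂
    refine ⟨_, exists_mem_partitionSums_of_chain (truncIncr_self hε) hab hc fun z hz => ?_, hval⟩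
    rcases List.mem_append.1 (hcπ hz) with hz | hz
    exacts [hπ₁ab z hz, hπ₂ab z hz]
  have hbddU : BddAbove U := by
    obtain ⟨M, hM⟩ := hbdd
    refine ⟨M, fun u hu => ?_⟩
    obtain ⟨v, hv, huv⟩ := hmerge u hu 0 (zero_mem_partitionSums hab)
    linarith [hM hv]
  have hbddD : BddAbove D := by
    obtain ⟨M, hM⟩ := hbdd
    refine ⟨M, fun d hd => ?_⟩
    obtain ⟨v, hv, hdv⟩ := hmerge 0 (zero_mem_partitionSums hab) d hd
    linarith [hM hv]
  rw [← csSup_add ⟨0, zero_mem_partitionSums hab⟩ hbddU ⟨0, zero_mem_partitionSums hab⟩ hbddD]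
  refine csSup_eq_csSup_of_forall_exists_le (fun v hv => ⟨v, hsplit v hv, le_rfl⟩) ?_
  rintro _ ⟨u, hu, d, hd, rfl⟩
  exact hmerge u hu d hd

section Cadlag

variable {x : ℝ → ℝ} {δ a b : ℝ}

def HasOscPartition (x : ℝ → ℝ) (δ a u : ℝ) : Prop :=
  ∃ (N : ℕ) (s : ℕ → ℝ), s 0 = a ∧ s N = u ∧ (∀ j, j < N → s j < s (j + 1)) ∧
    ∀ j, j < N → ∀ v ∈ Ico (s j) (s (j + 1)), |x v - x (s j)| ≤ δ

lemma hasOscPartition_self : HasOscPartition x δ a a :=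
  ⟨0, fun _ => a, rfl, rfl, by simp, by simp⟩

lemma HasOscPartition.extend {u w : ℝ} (h : HasOscPartition x δ a u) (huw : u < w)
    (hosc : ∀ v ∈ Ico u w, |x v - x u| ≤ δ) : HasOscPartition x δ a w := by
  obtain ⟨N, s, hs0, hsN, hs, hsosc⟩ := h
  refine ⟨N + 1, fun j => if j ≤ N then s j else w, by simp [hs0], by simp, ?_, ?_⟩
  · intro j hj
    rcases (Nat.lt_succ_iff.1 hj).lt_or_eq with hj | rfl
    · simpa [hj.le, Nat.succ_le_of_lt hj] using hs j hj
    · simpa [hsN] using huw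
  · intro j hj
    rcases (Nat.lt_succ_iff.1 hj).lt_or_eq with hj | rfl
    · simpa [hj.le, Nat.succ_le_of_lt hj] using hsosc j hj
    · simpa [hsN] using hosc

lemma Cadlag.hasOscPartition (hx : Cadlag x) (hδ : 0 < δ) (ha : 0 ≤ a) (hab : a ≤ b) :
    HasOscPartition x δ a b := by
  set A := {u | u ∈ Icc a b ∧ HasOscPartition x δ a u}
  have hA : a ∈ A := ⟨⟨le_rfl, hab⟩, hasOscPartition_self⟩
  have hbdd : BddAbove A := ⟨b, fun u hu => hu.1.2⟩
  have hac : a ≤ sSup A := le_csSup hbdd hA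
  have hcb : sSup A ≤ b := csSup_le ⟨a, hA⟩ fun u hu => hu.1.2
  have hc : HasOscPartition x δ a (sSup A) := by
    rcases hac.eq_or_lt with h | h
    · exact h ▸ hasOscPartition_self
    -- near the left of `sSup A`, `x` stays within `δ / 2` of its left limit
    obtain ⟨l, hl, hsub⟩ := mem_nhdsLT_iff_exists_Ioo_subset.1
      (hx.2 _ (ha.trans_lt h) (Metric.ball_mem_nhds _ (half_pos hδ)))
    obtain ⟨u, huA, hlu⟩ := exists_lt_of_lt_csSup ⟨a, hA⟩ hl
    rcases (le_csSup hbdd huA).eq_or_lt with huc | huc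
    · exact huc ▸ huA.2
    refine huA.2.extend huc fun v hv => ?_
    have hv' := hsub ⟨hlu.trans_le hv.1, hv.2⟩
    have hu' := hsub ⟨hlu, huc⟩
    simp only [mem_preimage, Metric.mem_ball, Real.dist_eq] at hv' hu'
    linarith [abs_sub_le (x v) (Function.leftLim x (sSup A)) (x u),
      abs_sub_comm (Function.leftLim x (sSup A)) (x u)]
  rcases hcb.eq_or_lt with hcb | hcb
  · exact hcb ▸ hc
  -- otherwise right-continuity at `sSup A` would push `A` beyond its supremum
  obtain ⟨w, hw, hsub⟩ := mem_nhdsGE_iff_exists_Ico_subset.1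
    (hx.1 _ (ha.trans hac) (Metric.ball_mem_nhds _ hδ))
  have hw' : min w b ∈ A := by
    refine ⟨⟨hac.trans (lt_min hw hcb).le, min_le_right _ _⟩, hc.extend (lt_min hw hcb) ?_⟩
    intro v hv
    have := hsub ⟨hv.1, hv.2.trans_le (min_le_left _ _)⟩
    simp only [mem_preimage, Metric.mem_ball, Real.dist_eq] at this
    exact this.le
  exact absurd (le_csSup hbdd hw') (not_le.2 (lt_min hw hcb))

lemma HasOscPartition.exists_cellIndex (h : HasOscPartition x δ a b) (hδ : 0 ≤ δ) :
    ∃ (N : ℕ) (k : ℝ → ℕ) (M : ℝ), Monotone k ∧ (∀ v, k v ≤ N) ∧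
      (∀ v ∈ Icc a b, ∀ w ∈ Icc a b, k v = k w → |x w - x v| ≤ 2 * δ) ∧
      ∀ v ∈ Icc a b, |x v| ≤ M := by
  obtain ⟨N, s, hs0, hsN, -, hsosc⟩ := h
  set k : ℝ → ℕ := fun v => Nat.findGreatest (fun j => s j ≤ v) N
  have hsk : ∀ v ∈ Icc a b, s (k v) ≤ v := fun v hv =>
    Nat.findGreatest_spec (P := fun j => s j ≤ v) (Nat.zero_le N) (hs0 ▸ hv.1)
  have hcell : ∀ v ∈ Icc a b, k v < N → |x v - x (s (k v))| ≤ δ := fun v hv hvN =>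
    hsosc _ hvN v ⟨hsk v hv, not_le.1 (Nat.findGreatest_is_greatest (lt_add_one _) hvN)⟩
  have hlast : ∀ v ∈ Icc a b, k v = N → v = b := fun v hv hvN =>
    le_antisymm hv.2 (hsN ▸ hvN ▸ hsk v hv)
  have hkN : ∀ v, k v ≤ N := fun v => Nat.findGreatest_le N
  refine ⟨N, k, (∑ j ∈ Finset.range (N + 1), |x (s j)|) + δ,
    fun v w hvw => Nat.findGreatest_mono (fun j hj => hj.trans hvw) le_rfl, hkN, ?_, ?_⟩
  · intro v hv w hw hvw
    rcases (hkN v).lt_or_eq with hvN | hvN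
    · have := hcell w hw (hvw ▸ hvN)
      rw [← hvw] at this
      linarith [abs_sub_le (x w) (x (s (k v))) (x v), abs_sub_comm (x (s (k v))) (x v),
        hcell v hv hvN]
    · rw [hlast v hv hvN, hlast w hw (hvw ▸ hvN)]
      rw [sub_self, abs_zero]
      positivity
  · intro v hv
    have hsum : |x (s (k v))| ≤ ∑ j ∈ Finset.range (N + 1), |x (s j)| :=
      Finset.single_le_sum (f := fun j => |x (s j)|) (fun _ _ => abs_nonneg _)
        (Finset.mem_range.2 (Nat.lt_succ_of_le (hkN v)))
    rcases (hkN v).lt_or_eq with hvN | hvN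
    · linarith [abs_sub_abs_le_abs_sub (x v) (x (s (k v))), hcell v hv hvN]
    · rw [hvN, hsN, ← hlast v hv hvN] at hsum
      linarith

lemma bddAbove_partitionSums_truncIncr_of_cellIndex {ε M : ℝ} {N : ℕ} {k : ℝ → ℕ}
    (hε : 0 ≤ ε) (hk : Monotone k) (hkN : ∀ v, k v ≤ N)
    (hcell : ∀ v ∈ Icc a b, ∀ w ∈ Icc a b, k v = k w → |x w - x v| ≤ ε)
    (hM : ∀ v ∈ Icc a b, |x v| ≤ M) :
    BddAbove (partitionSums (truncIncr x ε) a b) := by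
  refine ⟨N * (2 * M), ?_⟩
  rintro _ ⟨n, t, h0, hn, ht, rfl⟩
  have htab := fun i (hi : i ≤ n) => mem_Icc_of_partition h0 hn ht hi
  -- a step of the partition gains something only if it changes cells, which happens `≤ N` times
  have hstep : ∀ i < n, truncIncr x ε (t i) (t (i + 1)) ≤
      (k (t (i + 1)) : ℝ) * (2 * M) - k (t i) * (2 * M) := by
    intro i hi
    have hi₀ := htab i hi.le
    have hi₁ := htab (i + 1) hi
    rcases (hk (ht i hi).le).eq_or_lt with heq | hlt
    · rw [heq, sub_self]
      exact max_le (by linarith [hcell _ hi₀ _ hi₁ heq]) le_rfl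
    · have hgap : (1 : ℝ) ≤ k (t (i + 1)) - k (t i) := by
        have : ((k (t i) + 1 : ℕ) : ℝ) ≤ k (t (i + 1)) := by exact_mod_cast hlt
        push_cast at this
        linarith
      have hM₀ := (abs_nonneg _).trans (hM _ hi₀)
      have hΔ : truncIncr x ε (t i) (t (i + 1)) ≤ 2 * M :=
        max_le (by linarith [abs_sub (x (t (i + 1))) (x (t i)), hM _ hi₀, hM _ hi₁])
          (by linarith)
      rw [← sub_mul]
      exact hΔ.trans (le_mul_of_one_le_left (by linarith) hgap)
  calc ∑ i ∈ Finset.range n, truncIncr x ε (t i) (t (i + 1))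
      ≤ ∑ i ∈ Finset.range n, ((k (t (i + 1)) : ℝ) * (2 * M) - k (t i) * (2 * M)) :=
        Finset.sum_le_sum fun i hi => hstep i (Finset.mem_range.1 hi)
    _ = k (t n) * (2 * M) - k (t 0) * (2 * M) :=
        Finset.sum_range_sub (fun i => (k (t i) : ℝ) * (2 * M)) n
    _ ≤ N * (2 * M) := by
        have hM₀ := (abs_nonneg _).trans (hM _ (htab 0 (Nat.zero_le n)))
        have : (k (t n) : ℝ) ≤ N := by exact_mod_cast hkN _
        nlinarith [(Nat.cast_nonneg (k (t 0)) : (0 : ℝ) ≤ _)]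

lemma Cadlag.bddAbove_partitionSums_truncIncr (hx : Cadlag x) {ε : ℝ} (hε : 0 < ε) (ha : 0 ≤ a)
    (hab : a ≤ b) : BddAbove (partitionSums (truncIncr x ε) a b) := by
  obtain ⟨N, k, M, hk, hkN, hcell, hM⟩ :=
    (hx.hasOscPartition (half_pos hε) ha hab).exists_cellIndex (half_pos hε).le
  exact bddAbove_partitionSums_truncIncr_of_cellIndex hε.le hk hkN
    (fun v hv w hw hvw => (hcell v hv w hw hvw).trans_eq (by ring)) hM

end Cadlag

/-- `TTV = UTV + DTV` for càdlàg paths. -/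
theorem statement16 (x : ℝ → ℝ) (hx : Cadlag x) (ε : ℝ) (hε : 0 < ε)
    (t : ℝ) (ht : 0 ≤ t) :
    TTV x 0 t ε = UTV x 0 t ε + DTV x 0 t ε :=
  TTV_eq_UTV_add_DTV_of_bddAbove hε.le ht (hx.bddAbove_partitionSums_truncIncr hε le_rfl ht)
end
end

section
/- Let x: [0,∞) → ℝ be càdlàg, ε > 0 and t ≥ 0. Then | 2 · UTV(x,[0,t],ε) − TTV(x,[0,t],ε) − (x_t − x_0) | ≤ ε and | 2 · DTV(x,[0,t],ε) − TTV(x,[0,t],ε) + (x_t − x_0) | ≤ ε; equivalently, UTV(x,[0,t],ε) = (1/2)( TTV(x,[0,t],ε) + x_t − x_0 + R^ε_t ) and DTV(x,[0,t],ε) = (1/2)( TTV(x,[0,t],ε) − x_t + x_0 − R^ε_t ) for some R^ε_t with |R^ε_t| ≤ ε. -/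
open MeasureTheory Filter Topology Set
open scoped Classical

noncomputable section

/-!
The theorem amounts to `UTV + DTV = TTV` and `|UTV - DTV - (x t - x 0)| ≤ ε`. Both hold exactly
for finite sequences, and finitely many partitions of `[0, t]` always lie on one common grid
`s₀ < ⋯ < s_K`; so it suffices to treat `c = x ∘ s`. For a finite sequence a dynamic programme
computes the upward truncated variation together with the best upward sum minus the terminal
value (and the same for `-c`). Invariants of this recursion give
`UTV ≤ DTV + (c_K - c₀) + η` and a chain whose two-sided truncated sum is at least `UTV + DTV`;
the reverse inequality `TTV ≤ UTV + DTV` holds chain by chain. Càdlàg paths enter only through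
the finiteness of `TTV`: outside finitely many times `x` oscillates by at most `ε / 2` on
`[0, t]`, so its `ε`-truncated increments are dominated by those of a step function.
-/

namespace TruncatedVariation

/-! ### Truncated increments and chain sums -/

def upTrunc (η a b : ℝ) : ℝ := max (b - a - η) 0

def downTrunc (η a b : ℝ) : ℝ := max (a - b - η) 0

def absTrunc (η a b : ℝ) : ℝ := max (|b - a| - η) 0

lemma upTrunc_nonneg (η a b : ℝ) : 0 ≤ upTrunc η a b := le_max_right _ _

lemma absTrunc_nonneg (η a b : ℝ) : 0 ≤ absTrunc η a b := le_max_right _ _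

lemma sub_sub_le_upTrunc (η a b : ℝ) : b - a - η ≤ upTrunc η a b := le_max_left _ _

lemma sub_sub_le_absTrunc (η a b : ℝ) : b - a - η ≤ absTrunc η a b :=
  le_max_of_le_left (by linarith [le_abs_self (b - a)])

lemma sub_sub_le_absTrunc' (η a b : ℝ) : a - b - η ≤ absTrunc η a b :=
  le_max_of_le_left (by linarith [neg_abs_le (b - a)])

lemma upTrunc_le_absTrunc (η a b : ℝ) : upTrunc η a b ≤ absTrunc η a b :=
  max_le (sub_sub_le_absTrunc η a b) (absTrunc_nonneg η a b)

lemma downTrunc_le_absTrunc (η a b : ℝ) : downTrunc η a b ≤ absTrunc η a b :=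
  max_le (sub_sub_le_absTrunc' η a b) (absTrunc_nonneg η a b)

lemma upTrunc_neg (η a b : ℝ) : upTrunc η (-a) (-b) = downTrunc η a b := by
  simp only [upTrunc, downTrunc, sub_neg_eq_add, neg_add_eq_sub]

lemma absTrunc_eq_upTrunc_add_downTrunc {η : ℝ} (hη : 0 ≤ η) (a b : ℝ) :
    absTrunc η a b = upTrunc η a b + downTrunc η a b := by
  rcases le_total a b with h | h
  · rw [absTrunc, upTrunc, downTrunc, abs_of_nonneg (sub_nonneg.2 h),
      max_eq_right (by linarith : a - b - η ≤ 0), add_zero]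
  · rw [absTrunc, upTrunc, downTrunc, abs_of_nonpos (sub_nonpos.2 h),
      max_eq_right (by linarith : b - a - η ≤ 0), zero_add, neg_sub]

def chainSum (ψ : ℝ → ℝ → ℝ) (c : ℕ → ℝ) (n : ℕ) : ℝ :=
  ∑ i ∈ Finset.range n, ψ (c i) (c (i + 1))

lemma chainSum_zero (ψ : ℝ → ℝ → ℝ) (c : ℕ → ℝ) : chainSum ψ c 0 = 0 := rfl

lemma chainSum_succ (ψ : ℝ → ℝ → ℝ) (c : ℕ → ℝ) (n : ℕ) :
    chainSum ψ c (n + 1) = chainSum ψ c n + ψ (c n) (c (n + 1)) :=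
  Finset.sum_range_succ _ _

lemma chainSum_congr {ψ : ℝ → ℝ → ℝ} {c c' : ℕ → ℝ} {n : ℕ} (h : ∀ i ≤ n, c i = c' i) :
    chainSum ψ c n = chainSum ψ c' n :=
  Finset.sum_congr rfl fun i hi => by
    rw [h i (Finset.mem_range.1 hi).le, h (i + 1) (Finset.mem_range.1 hi)]

lemma chainSum_mono {ψ ψ' : ℝ → ℝ → ℝ} (h : ∀ a b, ψ a b ≤ ψ' a b) (c : ℕ → ℝ) (n : ℕ) :
    chainSum ψ c n ≤ chainSum ψ' c n :=
  Finset.sum_le_sum fun _ _ => h _ _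

lemma chainSum_upTrunc_neg (η : ℝ) (c : ℕ → ℝ) (n : ℕ) :
    chainSum (upTrunc η) (-c) n = chainSum (downTrunc η) c n :=
  Finset.sum_congr rfl fun _ _ => upTrunc_neg η _ _

structure IsGrid {α : Type*} [Preorder α] (r : ℕ → α) (n : ℕ) (a b : α) : Prop where
  left_le : a ≤ r 0
  le_right : r n ≤ b
  lt_succ : ∀ i < n, r i < r (i + 1)

namespace IsGrid

variable {α : Type*} [Preorder α] {r : ℕ → α} {n : ℕ} {a b : α}

lemma strictMonoOn (h : IsGrid r n a b) : StrictMonoOn r (Iic n) :=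
  strictMonoOn_Iic_of_lt_succ h.lt_succ

lemma lt (h : IsGrid r n a b) {i j : ℕ} (hij : i < j) (hj : j ≤ n) : r i < r j :=
  h.strictMonoOn (mem_Iic.2 (hij.le.trans hj)) (mem_Iic.2 hj) hij

lemma le (h : IsGrid r n a b) {i j : ℕ} (hij : i ≤ j) (hj : j ≤ n) : r i ≤ r j :=
  hij.eq_or_lt.elim (fun e => e ▸ le_rfl) fun hij => (h.lt hij hj).le

lemma mem_Icc (h : IsGrid r n a b) {i : ℕ} (hi : i ≤ n) : r i ∈ Icc a b :=
  ⟨h.left_le.trans (h.le (Nat.zero_le i) hi), (h.le hi le_rfl).trans h.le_right⟩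

lemma comp {s : ℕ → α} {K m : ℕ} {f : ℕ → ℕ} (hs : IsGrid s K a b) (hf : IsGrid f m 0 K) :
    IsGrid (s ∘ f) m a b where
  left_le := hs.left_le.trans (hs.le (Nat.zero_le _) (hf.mem_Icc (Nat.zero_le m)).2)
  le_right := (hs.le hf.le_right le_rfl).trans hs.le_right
  lt_succ i hi := hs.lt (hf.lt_succ i hi) (hf.mem_Icc hi).2

end IsGrid

def snoc {α : Type*} (f : ℕ → α) (m : ℕ) (b : α) : ℕ → α := fun j => if j ≤ m then f j else b

lemma snoc_of_le {α : Type*} (f : ℕ → α) {m j : ℕ} (b : α) (hj : j ≤ m) : snoc f m b j = f j :=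
  if_pos hj

lemma snoc_succ {α : Type*} (f : ℕ → α) (m : ℕ) (b : α) : snoc f m b (m + 1) = b :=
  if_neg (Nat.not_succ_le_self m)

lemma IsGrid.snoc {α : Type*} [Preorder α] {f : ℕ → α} {m : ℕ} {a b b' : α}
    (hf : IsGrid f m a b) (hb : f m < b') : IsGrid (snoc f m b') (m + 1) a b' where
  left_le := by rw [snoc_of_le _ _ (Nat.zero_le m)]; exact hf.left_le
  le_right := by rw [snoc_succ]
  lt_succ i hi := by
    rcases (Nat.lt_succ_iff.1 hi).lt_or_eq with hi | rfl
    · rw [snoc_of_le _ _ hi.le, snoc_of_le _ _ hi]; exact hf.lt_succ i hi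
    · rw [snoc_of_le _ _ le_rfl, snoc_succ]; exact hb

lemma chainSum_snoc (ψ : ℝ → ℝ → ℝ) (c : ℕ → ℝ) (f : ℕ → ℕ) (m b : ℕ) :
    chainSum ψ (c ∘ snoc f m b) (m + 1) = chainSum ψ (c ∘ f) m + ψ (c (f m)) (c b) := by
  rw [chainSum_succ, chainSum_congr (c := c ∘ snoc f m b) (c' := c ∘ f)
    fun i hi => congrArg c (snoc_of_le f b hi)]
  simp only [Function.comp, snoc_of_le f b le_rfl, snoc_succ]

def chainSet (ψ : ℝ → ℝ → ℝ) (x : ℝ → ℝ) (a b : ℝ) : Set ℝ :=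
  {v | ∃ n r, IsGrid r n a b ∧ v = chainSum ψ (x ∘ r) n}

lemma chainSet_eq (ψ : ℝ → ℝ → ℝ) (x : ℝ → ℝ) (a b : ℝ) :
    chainSet ψ x a b = {v : ℝ | ∃ (n : ℕ) (r : ℕ → ℝ), a ≤ r 0 ∧ r n ≤ b ∧
      (∀ i, i < n → r i < r (i + 1)) ∧ v = chainSum ψ (x ∘ r) n} :=
  Set.ext fun _ => ⟨fun ⟨n, r, ⟨h₁, h₂, h₃⟩, hv⟩ => ⟨n, r, h₁, h₂, h₃, hv⟩,
    fun ⟨n, r, h₁, h₂, h₃, hv⟩ => ⟨n, r, ⟨h₁, h₂, h₃⟩, hv⟩⟩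

lemma UTV_eq (x : ℝ → ℝ) (a b ε : ℝ) : UTV x a b ε = sSup (chainSet (upTrunc ε) x a b) := by
  rw [chainSet_eq]; rfl

lemma DTV_eq (x : ℝ → ℝ) (a b ε : ℝ) : DTV x a b ε = sSup (chainSet (downTrunc ε) x a b) := by
  rw [chainSet_eq]; rfl

lemma TTV_eq (x : ℝ → ℝ) (a b ε : ℝ) : TTV x a b ε = sSup (chainSet (absTrunc ε) x a b) := by
  rw [chainSet_eq]; rfl

/-! ### Finite sequences -/

section FiniteSequence

variable (c : ℕ → ℝ) (η : ℝ)

/-- Dynamic programme for the upward truncated variation of `c` on `{0, …, n}`: the first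
component is the best upward `η`-truncated sum of a chain of indices in `{0, …, n}`, the second
the best such sum minus the value of `c` at the last index of the chain. -/
def upVarAux : ℕ → ℝ × ℝ
  | 0 => (0, -c 0)
  | n + 1 =>
    let u := max (upVarAux n).1 ((upVarAux n).2 + c (n + 1) - η)
    (u, max (upVarAux n).2 (u - c (n + 1)))

def upVar (n : ℕ) : ℝ := (upVarAux c η n).1

def upVarSub (n : ℕ) : ℝ := (upVarAux c η n).2

def downVar (n : ℕ) : ℝ := upVar (-c) η n

def downVarAdd (n : ℕ) : ℝ := upVarSub (-c) η n

lemma upVar_zero : upVar c η 0 = 0 := rfl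

lemma upVarSub_zero : upVarSub c η 0 = -c 0 := rfl

lemma upVar_succ (n : ℕ) :
    upVar c η (n + 1) = max (upVar c η n) (upVarSub c η n + c (n + 1) - η) := rfl

lemma upVarSub_succ (n : ℕ) :
    upVarSub c η (n + 1) = max (upVarSub c η n) (upVar c η (n + 1) - c (n + 1)) := rfl

lemma downVar_zero : downVar c η 0 = 0 := rfl

lemma downVarAdd_zero : downVarAdd c η 0 = c 0 := neg_neg (c 0)

lemma downVar_succ (n : ℕ) :
    downVar c η (n + 1) = max (downVar c η n) (downVarAdd c η n - c (n + 1) - η) := by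
  simp only [downVar, downVarAdd, upVar_succ, Pi.neg_apply, ← sub_eq_add_neg]

lemma downVarAdd_succ (n : ℕ) :
    downVarAdd c η (n + 1) = max (downVarAdd c η n) (downVar c η (n + 1) + c (n + 1)) := by
  simp only [downVar, downVarAdd, upVarSub_succ, Pi.neg_apply, sub_neg_eq_add]

lemma upVar_mono : Monotone (upVar c η) :=
  monotone_nat_of_le_succ fun n => by rw [upVar_succ]; exact le_max_left _ _

lemma upVarSub_mono : Monotone (upVarSub c η) :=
  monotone_nat_of_le_succ fun n => by rw [upVarSub_succ]; exact le_max_left _ _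

lemma upVar_nonneg (n : ℕ) : 0 ≤ upVar c η n := upVar_mono c η (Nat.zero_le n)

lemma upVar_sub_le_upVarSub (n : ℕ) : upVar c η n - c n ≤ upVarSub c η n := by
  cases n with
  | zero => simp [upVar_zero, upVarSub_zero]
  | succ n => rw [upVarSub_succ]; exact le_max_right _ _

lemma chainSum_le_upVar_of_lt_succ {f : ℕ → ℕ} {m : ℕ} (hf : ∀ j < m, f j < f (j + 1)) :
    chainSum (upTrunc η) (c ∘ f) m ≤ upVar c η (f m) := by
  induction m with
  | zero => exact upVar_nonneg c η _
  | succ m ih =>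
    have ih := ih fun j hj => hf j (by omega)
    have hlt := hf m m.lt_succ_self
    obtain ⟨b, hb, hfb⟩ : ∃ b, f m ≤ b ∧ f (m + 1) = b + 1 := ⟨f (m + 1) - 1, by omega, by omega⟩
    rw [chainSum_succ, hfb, upVar_succ]
    simp only [Function.comp, hfb, upTrunc, add_max, add_zero]
    exact max_le (le_max_of_le_right (by
        linarith [upVarSub_mono c η hb, upVar_sub_le_upVarSub c η (f m)]))
      (le_max_of_le_left (ih.trans (upVar_mono c η hb)))

variable {c η}

lemma chainSum_le_upVar {f : ℕ → ℕ} {m n : ℕ} (hf : IsGrid f m 0 n) :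
    chainSum (upTrunc η) (c ∘ f) m ≤ upVar c η n :=
  (chainSum_le_upVar_of_lt_succ c η hf.lt_succ).trans (upVar_mono c η hf.le_right)

lemma chainSum_le_downVar {f : ℕ → ℕ} {m n : ℕ} (hf : IsGrid f m 0 n) :
    chainSum (downTrunc η) (c ∘ f) m ≤ downVar c η n := by
  rw [← chainSum_upTrunc_neg]
  exact chainSum_le_upVar (c := -c) hf

/-- `κ = 0, -1, 1` covers the three kinds of quantities of the dynamic programme: chain sums, and
chain sums minus or plus the value at the last index. -/
def Attains (ψ : ℝ → ℝ → ℝ) (c : ℕ → ℝ) (n : ℕ) (κ v : ℝ) : Prop :=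
  ∃ m f, IsGrid f m 0 n ∧ v ≤ chainSum ψ (c ∘ f) m + κ * c (f m)

namespace Attains

variable {ψ : ℝ → ℝ → ℝ} {n : ℕ} {κ v : ℝ}

lemma of_le_mul (n : ℕ) (hv : v ≤ κ * c 0) : Attains ψ c n κ v :=
  ⟨0, fun _ => 0, ⟨le_rfl, Nat.zero_le n, fun _ h => absurd h (Nat.not_lt_zero _)⟩,
    by simpa [chainSum_zero] using hv⟩

lemma mono {n' : ℕ} {v' : ℝ} (h : Attains ψ c n κ v) (hv : v' ≤ v) (hn : n ≤ n') :
    Attains ψ c n' κ v' :=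
  let ⟨m, f, hf, hle⟩ := h
  ⟨m, f, ⟨hf.left_le, hf.le_right.trans hn, hf.lt_succ⟩, hv.trans hle⟩

lemma max {a b : ℝ} (ha : Attains ψ c n κ a) (hb : Attains ψ c n κ b) :
    Attains ψ c n κ (max a b) := by
  rcases max_choice a b with h | h <;> rw [h] <;> assumption

lemma append_succ {κ' w : ℝ} (h : Attains ψ c n κ v)
    (hψ : ∀ a, κ * a + w ≤ ψ a (c (n + 1)) + κ' * c (n + 1)) :
    Attains ψ c (n + 1) κ' (v + w) := by
  obtain ⟨m, f, hf, hle⟩ := h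
  refine ⟨m + 1, snoc f m (n + 1), hf.snoc (Nat.lt_succ_of_le hf.le_right), ?_⟩
  rw [chainSum_snoc, snoc_succ]
  linarith [hψ (c (f m))]

lemma extend_end (hψ : ∀ a b, 0 ≤ ψ a b) (h : Attains ψ c n 0 v) (κ : ℝ) :
    Attains ψ c n κ (v + κ * c n) := by
  obtain ⟨m, f, hf, hle⟩ := h
  rcases hf.le_right.lt_or_eq with hlt | heq
  · refine ⟨m + 1, snoc f m n, hf.snoc hlt, ?_⟩
    rw [chainSum_snoc, snoc_succ]
    linarith [hψ (c (f m)) (c n)]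
  · exact ⟨m, f, hf, by rw [heq]; linarith⟩

lemma exists_mem_chainSet {x : ℝ → ℝ} {s : ℕ → ℝ} {a b : ℝ} (h : Attains ψ (x ∘ s) n 0 v)
    (hs : IsGrid s n a b) : ∃ w ∈ chainSet ψ x a b, v ≤ w := by
  obtain ⟨m, f, hf, hle⟩ := h
  have hle : v ≤ chainSum ψ ((x ∘ s) ∘ f) m := by simpa only [zero_mul, add_zero] using hle
  exact ⟨_, ⟨m, s ∘ f, hs.comp hf, rfl⟩, hle⟩

end Attains

variable (c η)

lemma attains_upVar (n : ℕ) :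
    Attains (upTrunc η) c n 0 (upVar c η n) ∧ Attains (upTrunc η) c n (-1) (upVarSub c η n) := by
  induction n with
  | zero =>
    exact ⟨.of_le_mul 0 (by simp [upVar_zero]), .of_le_mul 0 (by simp [upVarSub_zero])⟩
  | succ n ih =>
    obtain ⟨hU, hQ⟩ := ih
    have hψ (a : ℝ) : -1 * a + (c (n + 1) - η) ≤ upTrunc η a (c (n + 1)) + 0 * c (n + 1) := by
      linarith [sub_sub_le_upTrunc η a (c (n + 1))]
    have hU' : Attains (upTrunc η) c (n + 1) 0 (upVar c η (n + 1)) := by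
      rw [upVar_succ]
      exact (hU.mono le_rfl n.le_succ).max ((hQ.append_succ hψ).mono (by linarith) le_rfl)
    refine ⟨hU', ?_⟩
    rw [upVarSub_succ]
    exact (hQ.mono le_rfl n.le_succ).max
      ((hU'.extend_end (upTrunc_nonneg η) (-1)).mono (by linarith) le_rfl)

lemma attains_downVar (n : ℕ) : Attains (downTrunc η) c n 0 (downVar c η n) := by
  obtain ⟨m, f, hf, hle⟩ := (attains_upVar (-c) η n).1
  refine ⟨m, f, hf, hle.trans_eq ?_⟩
  rw [zero_mul, zero_mul, ← chainSum_upTrunc_neg]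
  rfl

lemma le_upVar_succ (n : ℕ) :
    upVar c η n ≤ upVar c η (n + 1) ∧ upVarSub c η n + c (n + 1) - η ≤ upVar c η (n + 1) := by
  rw [upVar_succ]
  exact ⟨le_max_left _ _, le_max_right _ _⟩

lemma le_downVar_succ (n : ℕ) :
    downVar c η n ≤ downVar c η (n + 1) ∧
      downVarAdd c η n - c (n + 1) - η ≤ downVar c η (n + 1) := by
  rw [downVar_succ]
  exact ⟨le_max_left _ _, le_max_right _ _⟩

lemma le_downVarAdd_succ (n : ℕ) :
    downVarAdd c η n ≤ downVarAdd c η (n + 1) ∧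
      downVar c η (n + 1) + c (n + 1) ≤ downVarAdd c η (n + 1) := by
  rw [downVarAdd_succ]
  exact ⟨le_max_left _ _, le_max_right _ _⟩

lemma upVarSub_add_downVarAdd_le (hη : 0 ≤ η) (n : ℕ) :
    upVarSub c η n + downVarAdd c η n ≤ upVar c η n + downVar c η n + η := by
  induction n with
  | zero => simp [upVarSub_zero, downVarAdd_zero, upVar_zero, downVar_zero, hη]
  | succ n ih =>
    obtain ⟨hU₁, hU₂⟩ := le_upVar_succ c η n
    obtain ⟨hD₁, hD₂⟩ := le_downVar_succ c η n
    rw [upVarSub_succ, downVarAdd_succ]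
    simp only [max_add, add_max, max_le_iff]
    refine ⟨⟨?_, ?_⟩, ?_, ?_⟩ <;> linarith

lemma upVar_le_downVar_add (hη : 0 ≤ η) (n : ℕ) :
    upVar c η n ≤ downVar c η n + (c n - c 0) + η := by
  suffices h : ∀ n, upVar c η n ≤ downVar c η n + (c n - c 0) + η ∧
      upVar c η n ≤ downVarAdd c η n - c 0 ∧ upVarSub c η n ≤ downVar c η n - c 0 + η from
    (h n).1
  intro n
  induction n with
  | zero =>
    simp only [upVar_zero, downVar_zero, downVarAdd_zero, upVarSub_zero]
    exact ⟨by linarith, by linarith, by linarith⟩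
  | succ n ih =>
    obtain ⟨-, h₁, h₂⟩ := ih
    obtain ⟨hD₁, hD₂⟩ := le_downVar_succ c η n
    obtain ⟨hR₁, hR₂⟩ := le_downVarAdd_succ c η n
    have hU : upVar c η (n + 1) ≤ downVar c η (n + 1) + (c (n + 1) - c 0) + η ∧
        upVar c η (n + 1) ≤ downVarAdd c η (n + 1) - c 0 := by
      rw [upVar_succ]
      exact ⟨max_le (by linarith) (by linarith), max_le (by linarith) (by linarith)⟩
    refine ⟨hU.1, hU.2, ?_⟩
    rw [upVarSub_succ]
    exact max_le (by linarith) (by linarith [hU.1])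

lemma attains_upVar_add_downVar (hη : 0 ≤ η) (n : ℕ) :
    Attains (absTrunc η) c n 0 (upVar c η n + downVar c η n) ∧
      Attains (absTrunc η) c n (-1) (upVarSub c η n + downVar c η n) ∧
      Attains (absTrunc η) c n 1 (downVarAdd c η n + upVar c η n) := by
  induction n with
  | zero =>
    refine ⟨.of_le_mul 0 ?_, .of_le_mul 0 ?_, .of_le_mul 0 ?_⟩ <;>
      simp [upVar_zero, upVarSub_zero, downVar_zero, downVarAdd_zero]
  | succ n ih =>
    obtain ⟨hT, hQ, hR⟩ := ih
    have hI := upVarSub_add_downVarAdd_le c η hη n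
    have hψ₁ (a : ℝ) : -1 * a + (c (n + 1) - η) ≤ absTrunc η a (c (n + 1)) + 0 * c (n + 1) := by
      linarith [sub_sub_le_absTrunc η a (c (n + 1))]
    have hψ₂ (a : ℝ) : 1 * a + (-c (n + 1) - η) ≤ absTrunc η a (c (n + 1)) + 0 * c (n + 1) := by
      linarith [sub_sub_le_absTrunc' η a (c (n + 1))]
    have hT' : Attains (absTrunc η) c (n + 1) 0 (upVar c η (n + 1) + downVar c η (n + 1)) := by
      rw [upVar_succ, downVar_succ, max_add, add_max, add_max]
      -- In the last case both maxima are realised through `n + 1`, which no single chain does;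
      -- but by `hI` that case is dominated by `upVar c η n + downVar c η n`.
      exact .max (.max (hT.mono le_rfl n.le_succ) ((hR.append_succ hψ₂).mono (by linarith) le_rfl))
        (.max ((hQ.append_succ hψ₁).mono (by linarith) le_rfl) (hT.mono (by linarith) n.le_succ))
    have hT₁ := (hT.mono le_rfl n.le_succ).extend_end (absTrunc_nonneg η)
    refine ⟨hT', ?_, ?_⟩
    · rw [upVarSub_succ, max_add]
      refine .max ?_ ((hT'.extend_end (absTrunc_nonneg η) (-1)).mono (by linarith) le_rfl)
      rw [downVar_succ, add_max]
      exact .max (hQ.mono le_rfl n.le_succ) ((hT₁ (-1)).mono (by linarith) le_rfl)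
    · rw [downVarAdd_succ, max_add]
      refine .max ?_ ((hT'.extend_end (absTrunc_nonneg η) 1).mono (by linarith) le_rfl)
      rw [upVar_succ, add_max]
      exact .max (hR.mono le_rfl n.le_succ) ((hT₁ 1).mono (by linarith) le_rfl)

end FiniteSequence

/-! ### Refinement to a common grid -/

lemma exists_isGrid_enum (S : Finset ℝ) {a b : ℝ} (ha : a ∈ S) (hb : b ∈ S)
    (hS : ∀ y ∈ S, y ∈ Icc a b) :
    ∃ (s : ℕ → ℝ) (K : ℕ), IsGrid s K a b ∧ s 0 = a ∧ s K = b ∧ ∀ y ∈ S, ∃ j ≤ K, s j = y := by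
  have hk : 0 < S.card := Finset.card_pos.2 ⟨a, ha⟩
  set e := S.orderEmbOfFin rfl
  set s : ℕ → ℝ := fun j => if h : j < S.card then e ⟨j, h⟩ else b
  have hs (j : ℕ) (h : j < S.card) : s j = e ⟨j, h⟩ := dif_pos h
  have h₀ : s 0 = a := by
    rw [hs 0 hk, Finset.orderEmbOfFin_zero rfl hk]
    exact le_antisymm (Finset.min'_le _ _ ha) (Finset.le_min' _ _ _ fun y hy => (hS y hy).1)
  have hK : s (S.card - 1) = b := by
    rw [hs _ (Nat.sub_lt hk one_pos), Finset.orderEmbOfFin_last rfl hk]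
    exact le_antisymm (Finset.max'_le _ _ _ fun y hy => (hS y hy).2) (Finset.le_max' _ _ hb)
  refine ⟨s, S.card - 1, ⟨h₀.ge, hK.le, fun i hi => ?_⟩, h₀, hK, fun y hy => ?_⟩
  · rw [hs i (by omega), hs (i + 1) (by omega)]
    exact e.strictMono (Fin.mk_lt_mk.2 i.lt_succ_self)
  · obtain ⟨j, rfl⟩ : y ∈ Set.range e := by rw [Finset.range_orderEmbOfFin]; exact hy
    exact ⟨j, by omega, hs j j.2⟩

lemma IsGrid.exists_isGrid_comp_eq {s r : ℕ → ℝ} {K n : ℕ} {a b a' b' : ℝ}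
    (hs : IsGrid s K a b) (hr : IsGrid r n a' b') (hrs : ∀ i ≤ n, ∃ j ≤ K, s j = r i) :
    ∃ f : ℕ → ℕ, IsGrid f n 0 K ∧ ∀ i ≤ n, s (f i) = r i := by
  choose! f hfK hf using hrs
  refine ⟨f, ⟨Nat.zero_le _, hfK n le_rfl, fun i hi => ?_⟩, hf⟩
  by_contra h
  have := hs.le (not_lt.1 h) (hfK i hi.le)
  rw [hf i hi.le, hf (i + 1) hi] at this
  exact (hr.lt_succ i hi).not_ge this

lemma exists_isGrid_refining {a b : ℝ} (hab : a ≤ b) (S : Finset ℝ) (hS : ∀ y ∈ S, y ∈ Icc a b) :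
    ∃ (s : ℕ → ℝ) (K : ℕ), IsGrid s K a b ∧ s 0 = a ∧ s K = b ∧
      ∀ (r : ℕ → ℝ) (n : ℕ), IsGrid r n a b → (∀ i ≤ n, r i ∈ S) →
        ∃ f : ℕ → ℕ, IsGrid f n 0 K ∧ ∀ i ≤ n, s (f i) = r i := by
  obtain ⟨s, K, hs, h₀, hK, hsurj⟩ := exists_isGrid_enum (insert a (insert b S))
    (Finset.mem_insert_self _ _) (Finset.mem_insert_of_mem (Finset.mem_insert_self _ _))
    (by simpa [hab] using hS)
  exact ⟨s, K, hs, h₀, hK, fun r n hr hrS =>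
    hs.exists_isGrid_comp_eq hr fun i hi => hsurj _ (by simp [hrS i hi])⟩

variable {x : ℝ → ℝ} {a b ε : ℝ}

lemma zero_mem_chainSet (ψ : ℝ → ℝ → ℝ) (hab : a ≤ b) : (0 : ℝ) ∈ chainSet ψ x a b :=
  ⟨0, fun _ => a, ⟨le_rfl, hab, fun _ h => absurd h (Nat.not_lt_zero _)⟩, rfl⟩

lemma bddAbove_chainSet_of_le {ψ ψ' : ℝ → ℝ → ℝ} (h : ∀ a b, ψ a b ≤ ψ' a b)
    (hb : BddAbove (chainSet ψ' x a b)) : BddAbove (chainSet ψ x a b) := by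
  obtain ⟨B, hB⟩ := hb
  refine ⟨B, ?_⟩
  rintro _ ⟨n, r, hr, rfl⟩
  exact (chainSum_mono h _ _).trans (hB ⟨n, r, hr, rfl⟩)

lemma chainSet_upTrunc_neg (ε : ℝ) (x : ℝ → ℝ) (a b : ℝ) :
    chainSet (upTrunc ε) (-x) a b = chainSet (downTrunc ε) x a b :=
  Set.ext fun _ => exists_congr fun n => exists_congr fun r => and_congr_right fun _ => by
    rw [← chainSum_upTrunc_neg]; rfl

lemma chainSet_downTrunc_neg (ε : ℝ) (x : ℝ → ℝ) (a b : ℝ) :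
    chainSet (downTrunc ε) (-x) a b = chainSet (upTrunc ε) x a b := by
  rw [← chainSet_upTrunc_neg, neg_neg]

lemma mem_image_range (r : ℕ → ℝ) {i n : ℕ} (hi : i ≤ n) :
    r i ∈ (Finset.range (n + 1)).image r :=
  Finset.mem_image_of_mem r (Finset.mem_range.2 (Nat.lt_succ_of_le hi))

lemma IsGrid.image_range_subset {r : ℕ → ℝ} {n : ℕ} (hr : IsGrid r n a b) :
    ∀ y ∈ (Finset.range (n + 1)).image r, y ∈ Icc a b := by
  simp only [Finset.mem_image, Finset.mem_range]
  rintro _ ⟨i, hi, rfl⟩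
  exact hr.mem_Icc (Nat.le_of_lt_succ hi)

lemma le_sSup_downTrunc_add (hab : a ≤ b) (hε : 0 ≤ ε)
    (hD : BddAbove (chainSet (downTrunc ε) x a b)) {v : ℝ} (hv : v ∈ chainSet (upTrunc ε) x a b) :
    v ≤ sSup (chainSet (downTrunc ε) x a b) + (x b - x a) + ε := by
  obtain ⟨n, r, hr, rfl⟩ := hv
  obtain ⟨s, K, hs, h₀, hK, hfac⟩ := exists_isGrid_refining hab _ hr.image_range_subset
  obtain ⟨f, hf, hrf⟩ := hfac r n hr fun i hi => mem_image_range r hi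
  obtain ⟨w, hw, hle⟩ := (attains_downVar (x ∘ s) ε K).exists_mem_chainSet hs
  rw [chainSum_congr (c' := (x ∘ s) ∘ f) fun i hi => by simp [hrf i hi]]
  calc chainSum (upTrunc ε) ((x ∘ s) ∘ f) n ≤ upVar (x ∘ s) ε K := chainSum_le_upVar hf
    _ ≤ downVar (x ∘ s) ε K + (x (s K) - x (s 0)) + ε := upVar_le_downVar_add _ ε hε K
    _ ≤ _ := by rw [h₀, hK]; linarith [le_csSup hD hw]

lemma add_le_sSup_absTrunc (hab : a ≤ b) (hε : 0 ≤ ε)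
    (hT : BddAbove (chainSet (absTrunc ε) x a b)) {u d : ℝ}
    (hu : u ∈ chainSet (upTrunc ε) x a b) (hd : d ∈ chainSet (downTrunc ε) x a b) :
    u + d ≤ sSup (chainSet (absTrunc ε) x a b) := by
  obtain ⟨n₁, r₁, hr₁, rfl⟩ := hu
  obtain ⟨n₂, r₂, hr₂, rfl⟩ := hd
  obtain ⟨s, K, hs, -, -, hfac⟩ := exists_isGrid_refining hab
    ((Finset.range (n₁ + 1)).image r₁ ∪ (Finset.range (n₂ + 1)).image r₂) fun y hy =>
      (Finset.mem_union.1 hy).elim (hr₁.image_range_subset y) (hr₂.image_range_subset y)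
  obtain ⟨f₁, hf₁, e₁⟩ :=
    hfac r₁ n₁ hr₁ fun i hi => Finset.mem_union_left _ (mem_image_range r₁ hi)
  obtain ⟨f₂, hf₂, e₂⟩ :=
    hfac r₂ n₂ hr₂ fun i hi => Finset.mem_union_right _ (mem_image_range r₂ hi)
  obtain ⟨w, hw, hle⟩ := (attains_upVar_add_downVar (x ∘ s) ε hε K).1.exists_mem_chainSet hs
  rw [chainSum_congr (c := x ∘ r₁) (c' := (x ∘ s) ∘ f₁) fun i hi => by simp [e₁ i hi],
    chainSum_congr (c := x ∘ r₂) (c' := (x ∘ s) ∘ f₂) fun i hi => by simp [e₂ i hi]]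
  calc _ ≤ upVar (x ∘ s) ε K + downVar (x ∘ s) ε K :=
        add_le_add (chainSum_le_upVar hf₁) (chainSum_le_downVar hf₂)
    _ ≤ _ := hle.trans (le_csSup hT hw)

theorem UTV_add_DTV (hab : a ≤ b) (hε : 0 ≤ ε) (hT : BddAbove (chainSet (absTrunc ε) x a b)) :
    UTV x a b ε + DTV x a b ε = TTV x a b ε := by
  rw [UTV_eq, DTV_eq, TTV_eq]
  have hne (ψ : ℝ → ℝ → ℝ) : (chainSet ψ x a b).Nonempty := ⟨0, zero_mem_chainSet ψ hab⟩
  refine le_antisymm ?_ (csSup_le (hne _) ?_)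
  · have hU (d : ℝ) (hd : d ∈ chainSet (downTrunc ε) x a b) :
        sSup (chainSet (upTrunc ε) x a b) ≤ sSup (chainSet (absTrunc ε) x a b) - d :=
      csSup_le (hne _) fun u hu => le_sub_iff_add_le.2 (add_le_sSup_absTrunc hab hε hT hu hd)
    have hD : sSup (chainSet (downTrunc ε) x a b) ≤
        sSup (chainSet (absTrunc ε) x a b) - sSup (chainSet (upTrunc ε) x a b) :=
      csSup_le (hne _) fun d hd => by linarith [hU d hd]
    linarith
  · rintro _ ⟨n, r, hr, rfl⟩
    have hsplit : chainSum (absTrunc ε) (x ∘ r) n =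
        chainSum (upTrunc ε) (x ∘ r) n + chainSum (downTrunc ε) (x ∘ r) n := by
      simp only [chainSum, absTrunc_eq_upTrunc_add_downTrunc hε, Finset.sum_add_distrib]
    rw [hsplit]
    exact add_le_add (le_csSup (bddAbove_chainSet_of_le (upTrunc_le_absTrunc ε) hT) ⟨n, r, hr, rfl⟩)
      (le_csSup (bddAbove_chainSet_of_le (downTrunc_le_absTrunc ε) hT) ⟨n, r, hr, rfl⟩)

theorem abs_UTV_sub_DTV_sub_le (hab : a ≤ b) (hε : 0 ≤ ε)
    (hT : BddAbove (chainSet (absTrunc ε) x a b)) :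
    |UTV x a b ε - DTV x a b ε - (x b - x a)| ≤ ε := by
  have hU := bddAbove_chainSet_of_le (upTrunc_le_absTrunc ε) hT
  have hD := bddAbove_chainSet_of_le (downTrunc_le_absTrunc ε) hT
  have h₁ : UTV x a b ε ≤ DTV x a b ε + (x b - x a) + ε := by
    rw [UTV_eq, DTV_eq]
    exact csSup_le ⟨0, zero_mem_chainSet _ hab⟩ fun v hv => le_sSup_downTrunc_add hab hε hD hv
  have h₂ : DTV x a b ε ≤ UTV x a b ε + (-x b - -x a) + ε := by
    rw [UTV_eq, DTV_eq, ← chainSet_upTrunc_neg, ← chainSet_downTrunc_neg ε x a b]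
    rw [← chainSet_downTrunc_neg] at hU
    exact csSup_le ⟨0, zero_mem_chainSet _ hab⟩ fun v hv => le_sSup_downTrunc_add hab hε hU hv
  rw [abs_le]
  constructor <;> linarith

/-! ### Càdlàg paths -/

lemma exists_mem_abs_sub_le_of_tendsto {α : Type*} {l : Filter α} {f : α → ℝ} {y : ℝ}
    (h : Tendsto f l (𝓝 y)) {δ : ℝ} (hδ : 0 < δ) :
    ∃ s ∈ l, ∀ u ∈ s, ∀ v ∈ s, |f v - f u| ≤ δ := by
  refine ⟨_, Metric.tendsto_nhds.1 h (δ / 2) (half_pos hδ),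
    fun u (hu : dist (f u) y < δ / 2) v (hv : dist (f v) y < δ / 2) => ?_⟩
  rw [← Real.dist_eq]
  linarith [dist_triangle_right (f v) (f u) y]

lemma _root_.Cadlag.exists_abs_sub_le_near {x : ℝ → ℝ} (hx : Cadlag x) {δ : ℝ} (hδ : 0 < δ) {a : ℝ}
    (ha : 0 ≤ a) :
    ∃ l < a, ∃ c > a, (∀ u ∈ Ico a c, ∀ v ∈ Ico a c, |x v - x u| ≤ δ) ∧
      ∀ u ∈ Ioo l a, ∀ v ∈ Ioo l a, 0 ≤ u → |x v - x u| ≤ δ := by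
  obtain ⟨s, hs, hsδ⟩ := exists_mem_abs_sub_le_of_tendsto (hx.1 a ha) hδ
  obtain ⟨c, hc, hcs⟩ := mem_nhdsGE_iff_exists_Ico_subset.1 hs
  have hright : ∀ u ∈ Ico a c, ∀ v ∈ Ico a c, |x v - x u| ≤ δ :=
    fun u hu v hv => hsδ u (hcs hu) v (hcs hv)
  rcases ha.eq_or_lt with rfl | ha
  · exact ⟨-1, by norm_num, c, hc, hright, fun u hu _ _ h => absurd hu.2 h.not_gt⟩
  · obtain ⟨s', hs', hs'δ⟩ := exists_mem_abs_sub_le_of_tendsto (hx.2 a ha) hδ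
    obtain ⟨l, hl, hls⟩ := mem_nhdsLT_iff_exists_Ioo_subset.1 hs'
    exact ⟨l, hl, c, hc, hright, fun u hu v hv _ => hs'δ u (hls hu) v (hls hv)⟩

lemma _root_.Cadlag.exists_finset_abs_sub_le {x : ℝ → ℝ} (hx : Cadlag x) {δ : ℝ} (hδ : 0 < δ)
    (t : ℝ) :
    ∃ G : Finset ℝ, ∀ u v, 0 ≤ u → u ≤ v → v ≤ t → (∀ g ∈ G, ¬ (u < g ∧ g ≤ v)) →
      |x v - x u| ≤ δ := by
  choose l hl c hc hright hleft using fun a : Icc (0 : ℝ) t => hx.exists_abs_sub_le_near hδ a.2.1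
  obtain ⟨F, hF⟩ := isCompact_Icc.elim_finite_subcover (fun a => Ioo (l a) (c a))
    (fun _ => isOpen_Ioo) fun a ha => mem_iUnion.2 ⟨⟨a, ha⟩, hl ⟨a, ha⟩, hc ⟨a, ha⟩⟩
  refine ⟨F.image (↑) ∪ F.image c, fun u v hu huv hvt hG => ?_⟩
  obtain ⟨a, haF, hua⟩ := mem_iUnion₂.1 (hF ⟨hu, huv.trans hvt⟩)
  rcases lt_or_ge u a with hua' | hau
  · have hva : v < a := not_le.1 fun hav =>
      hG a (Finset.mem_union_left _ (Finset.mem_image_of_mem _ haF)) ⟨hua', hav⟩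
    exact hleft a u ⟨hua.1, hua'⟩ v ⟨hua.1.trans_le huv, hva⟩ hu
  · have hvc : v < c a := not_le.1 fun hcv =>
      hG (c a) (Finset.mem_union_right _ (Finset.mem_image_of_mem _ haF)) ⟨hua.2, hcv⟩
    exact hright a u ⟨hau, hua.2⟩ v ⟨hau.trans huv, hvc⟩

def floorIn (G : Finset ℝ) (u : ℝ) : ℝ :=
  (insert 0 (G.filter (· ≤ u))).max' (Finset.insert_nonempty _ _)

lemma floorIn_mem (G : Finset ℝ) (u : ℝ) : floorIn G u ∈ insert 0 G :=
  Finset.insert_subset_insert _ (Finset.filter_subset _ _) (Finset.max'_mem _ _)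

lemma floorIn_nonneg (G : Finset ℝ) (u : ℝ) : 0 ≤ floorIn G u :=
  Finset.le_max' _ _ (Finset.mem_insert_self _ _)

lemma floorIn_le (G : Finset ℝ) {u : ℝ} (hu : 0 ≤ u) : floorIn G u ≤ u :=
  Finset.max'_le _ _ _ fun _ hy => (Finset.mem_insert.1 hy).elim (· ▸ hu)
    fun hy => (Finset.mem_filter.1 hy).2

lemma le_floorIn (G : Finset ℝ) {u g : ℝ} (hg : g ∈ G) (hgu : g ≤ u) : g ≤ floorIn G u :=
  Finset.le_max' _ _ (Finset.mem_insert_of_mem (Finset.mem_filter.2 ⟨hg, hgu⟩))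

lemma floorIn_mono (G : Finset ℝ) : Monotone (floorIn G) := fun _ _ h =>
  Finset.max'_subset _ fun y hy => by
    simp only [Finset.mem_insert, Finset.mem_filter] at hy ⊢
    exact hy.imp_right fun hy => ⟨hy.1, hy.2.trans h⟩

lemma sum_abs_sub_le_card_mul {α : Type*} [LinearOrder α] (H : Finset α) (y : α → ℝ)
    {m : ℕ → α} {n : ℕ} (hH : ∀ i ≤ n, m i ∈ H) (hm : ∀ i j, i ≤ j → j ≤ n → m i ≤ m j) :
    ∑ i ∈ Finset.range n, |y (m (i + 1)) - y (m i)| ≤ H.card * (2 * ∑ h ∈ H, |y h|) := by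
  set B := ∑ h ∈ H, |y h|
  have hB (i : ℕ) (hi : i ≤ n) : |y (m i)| ≤ B :=
    Finset.single_le_sum (f := fun h => |y h|) (fun _ _ => abs_nonneg _) (hH i hi)
  set I := (Finset.range n).filter fun i => m i < m (i + 1)
  have hI : I.card ≤ H.card := by
    refine Finset.card_le_card_of_injOn (fun i => m (i + 1)) (fun i hi => hH _ ?_) ?_
    · exact Finset.mem_range.1 (Finset.mem_filter.1 hi).1
    · intro i hi j hj hij
      simp only [I, Finset.mem_coe, Finset.mem_filter, Finset.mem_range] at hi hj
      by_contra hne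
      rcases Nat.lt_or_gt_of_ne hne with h | h
      · exact ((hm (i + 1) j h hj.1.le).trans_lt hj.2).ne hij
      · exact ((hm (j + 1) i h hi.1.le).trans_lt hi.2).ne hij.symm
  calc ∑ i ∈ Finset.range n, |y (m (i + 1)) - y (m i)|
      = ∑ i ∈ I, |y (m (i + 1)) - y (m i)| := by
        refine (Finset.sum_filter_of_ne fun i hi hne => ?_).symm
        refine (hm i (i + 1) i.le_succ (Finset.mem_range.1 hi)).lt_of_ne fun h => hne ?_
        rw [h, sub_self, abs_zero]
    _ ≤ ∑ _i ∈ I, 2 * B := Finset.sum_le_sum fun i hi => by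
        have hi := Finset.mem_range.1 (Finset.mem_filter.1 hi).1
        linarith [abs_sub (y (m (i + 1))) (y (m i)), hB i hi.le, hB (i + 1) hi]
    _ ≤ H.card * (2 * B) := by
        rw [Finset.sum_const, nsmul_eq_mul]
        exact mul_le_mul_of_nonneg_right (by exact_mod_cast hI)
          (mul_nonneg zero_le_two (Finset.sum_nonneg fun _ _ => abs_nonneg _))

theorem _root_.Cadlag.bddAbove_chainSet_absTrunc {x : ℝ → ℝ} (hx : Cadlag x) {ε : ℝ}
    (hε : 0 < ε) (t : ℝ) : BddAbove (chainSet (absTrunc ε) x 0 t) := by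
  obtain ⟨G, hG⟩ := hx.exists_finset_abs_sub_le (half_pos hε) t
  refine ⟨(insert 0 G).card * (2 * ∑ h ∈ insert 0 G, |x h|), ?_⟩
  rintro _ ⟨n, r, hr, rfl⟩
  have hclose (i : ℕ) (hi : i ≤ n) : |x (r i) - x (floorIn G (r i))| ≤ ε / 2 :=
    hG _ _ (floorIn_nonneg G _) (floorIn_le G (hr.mem_Icc hi).1) (hr.mem_Icc hi).2
      fun g hg h => h.1.not_ge (le_floorIn G hg h.2)
  calc chainSum (absTrunc ε) (x ∘ r) n
      ≤ ∑ i ∈ Finset.range n, |x (floorIn G (r (i + 1))) - x (floorIn G (r i))| :=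
        Finset.sum_le_sum fun i hi => by
          have hi := Finset.mem_range.1 hi
          refine max_le ?_ (abs_nonneg _)
          have h₁ := abs_sub_le (x (r (i + 1))) (x (floorIn G (r (i + 1)))) (x (r i))
          have h₂ := abs_sub_le (x (floorIn G (r (i + 1)))) (x (floorIn G (r i))) (x (r i))
          rw [abs_sub_comm (x (floorIn G (r i)))] at h₂
          simp only [Function.comp_apply]
          linarith [hclose i hi.le, hclose (i + 1) hi]
    _ ≤ _ := sum_abs_sub_le_card_mul _ x (fun i _ => floorIn_mem G _)
        fun i j hij hj => floorIn_mono G (hr.le hij hj)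

end TruncatedVariation

/-- the representation of `UTV` and `DTV` in terms of `TTV`, the increment
`x_t - x_0` and a remainder `R` with `|R| ≤ ε`. -/
theorem statement17 (x : ℝ → ℝ) (hx : Cadlag x) (ε : ℝ) (hε : 0 < ε)
    (t : ℝ) (ht : 0 ≤ t) :
    |2 * UTV x 0 t ε - TTV x 0 t ε - (x t - x 0)| ≤ ε ∧
    |2 * DTV x 0 t ε - TTV x 0 t ε + (x t - x 0)| ≤ ε ∧
    ∃ R : ℝ, |R| ≤ ε ∧
      UTV x 0 t ε = (1 / 2) * (TTV x 0 t ε + x t - x 0 + R) ∧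
      DTV x 0 t ε = (1 / 2) * (TTV x 0 t ε - x t + x 0 - R) := by
  have hT := hx.bddAbove_chainSet_absTrunc hε t
  have hsum := TruncatedVariation.UTV_add_DTV ht hε.le hT
  have hdiff := TruncatedVariation.abs_UTV_sub_DTV_sub_le ht hε.le hT
  refine ⟨?_, ?_, UTV x 0 t ε - DTV x 0 t ε - (x t - x 0), hdiff, by linarith, by linarith⟩
  · rwa [← hsum, show ∀ u d Δ : ℝ, 2 * u - (u + d) - Δ = u - d - Δ by intros; ring]
  · rwa [← hsum, show ∀ u d Δ : ℝ, 2 * d - (u + d) + Δ = -(u - d - Δ) by intros; ring, abs_neg]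
end
end

section
/- Let y: [0,∞) → ℝ be a càdlàg path of locally finite total variation, let f: ℝ → ℝ be continuously differentiable and let F be an antiderivative of f. Then for every t > 0, ∫_{(0,t]} f(y_s) dy_s = F(y_t) − F(y_0) − Σ_{0<s≤t} ( F(y_s) − F(y_{s−}) − f(y_s) Δy_s ), where the sum converges absolutely. -/
/-!
Write `y = u - v` with `u`, `v` Stieltjes functions and put `w = u + v`. The defect `D(a, b)`
between the two sides of the formula on `(a, b]` is additive in the interval. Given `ε > 0`, let
`δ` be a modulus of uniform continuity of `f` on the range of `y`. On an interval with
`w(b-) - w(a) ≤ δ` the path `y` stays `δ`-close to `y a` before `b`, so the increment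
`F(y(b-)) - F(y a)` and the integral over `(a, b)` both equal `f(y a) (y(b-) - y a)` up to
`ε (w(b-) - w(a))`, every jump inside `(a, b)` contributes at most `ε Δw`, and the jump at `b`
cancels exactly; hence `|D(a, b)| ≤ 3 ε (w b - w a)`. Real induction along `[0, t]`, using the
left limits and the right continuity of `w`, turns this into `|D(0, t)| ≤ 3 ε (w t - w 0)`.
-/

open MeasureTheory Filter Topology Set
open scoped Classical

noncomputable section

open Function
open scoped ENNReal

def ModulusOn (f : ℝ → ℝ) (K : Set ℝ) (δ ε : ℝ) : Prop :=
  ∀ x ∈ K, ∀ x' ∈ K, |x - x'| ≤ δ → |f x - f x'| ≤ ε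

namespace ModulusOn

variable {f : ℝ → ℝ} {K : Set ℝ} {δ ε : ℝ}

theorem mono {K' : Set ℝ} (h : ModulusOn f K δ ε) (hK : K' ⊆ K) : ModulusOn f K' δ ε :=
  fun x hx x' hx' hxx' => h x (hK hx) x' (hK hx') hxx'

theorem nonneg (h : ModulusOn f K δ ε) (hδ : 0 ≤ δ) {x : ℝ} (hx : x ∈ K) : 0 ≤ ε :=
  (abs_nonneg _).trans (h x hx x hx (by simpa using hδ))

theorem of_abs_le {M : ℝ} (h : ∀ x ∈ K, |f x| ≤ M) : ModulusOn f K δ (2 * M) :=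
  fun x hx x' hx' _ => (abs_sub _ _).trans (by linarith [h x hx, h x' hx'])

end ModulusOn

theorem Continuous.exists_modulusOn_Icc {f : ℝ → ℝ} (hf : Continuous f) (A B : ℝ) {ε : ℝ}
    (hε : 0 < ε) : ∃ δ > 0, ModulusOn f (Icc A B) δ ε :=
  Metric.uniformContinuousOn_iff_le.1
    (isCompact_Icc.uniformContinuousOn_of_continuous hf.continuousOn) ε hε

theorem abs_sub_sub_mul_le_of_hasDerivAt {F f : ℝ → ℝ} (hF : ∀ z, HasDerivAt F (f z) z) {p q ξ ε : ℝ}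
    (h : ∀ c ∈ uIcc p q, |f c - f ξ| ≤ ε) : |F q - F p - f ξ * (q - p)| ≤ ε * |q - p| := by
  have hderiv : ∀ z, HasDerivAt (fun x => F x - f ξ * x) (f z - f ξ) z := fun z =>
    ((hF z).sub ((hasDerivAt_id' z).const_mul (f ξ))).congr_deriv (by ring)
  have := (convex_uIcc p q).norm_image_sub_le_of_norm_hasDerivWithin_le
    (fun z _ => (hderiv z).hasDerivWithinAt) h left_mem_uIcc right_mem_uIcc
  rw [Real.norm_eq_abs, Real.norm_eq_abs] at this
  convert this using 2
  ring

theorem ModulusOn.abs_sub_sub_mul_le {F f : ℝ → ℝ} {A B δ ε p q ξ : ℝ}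
    (hmod : ModulusOn f (Icc A B) δ ε) (hF : ∀ z, HasDerivAt F (f z) z)
    (hp : p ∈ Icc A B) (hq : q ∈ Icc A B) (hpq : |q - p| ≤ δ) (hξ : ξ = p ∨ ξ = q) :
    |F q - F p - f ξ * (q - p)| ≤ ε * |q - p| := by
  refine abs_sub_sub_mul_le_of_hasDerivAt hF fun c hc => hmod c (uIcc_subset_Icc hp hq hc) ξ
    (by rcases hξ with rfl | rfl <;> assumption) ?_
  rcases hξ with rfl | rfl
  · exact (abs_sub_left_of_mem_uIcc hc).trans hpq
  · rw [abs_sub_comm]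
    exact (abs_sub_right_of_mem_uIcc hc).trans hpq

theorem tsum_measure_singleton_le {α : Type*} [MeasurableSpace α] [MeasurableSingletonClass α]
    (μ : Measure α) (S : Set α) : ∑' s : S, μ {(s : α)} ≤ μ S := by
  simpa using tsum_meas_le_meas_iUnion_of_disjoint μ (As := fun s : S => {(s : α)})
    (fun _ => measurableSet_singleton _)
    (fun a b hab => disjoint_singleton.2 (Subtype.coe_injective.ne hab))

def jumpCorrection (F f y : ℝ → ℝ) (s : ℝ) : ℝ :=
  F (y s) - F (leftLim y s) - f (y s) * jmp y s

namespace StieltjesFunction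

section

variable (w : StieltjesFunction ℝ)

theorem jmp_nonneg (s : ℝ) : 0 ≤ jmp w s := sub_nonneg.2 (w.mono.leftLim_le le_rfl)

theorem toReal_measure_singleton (s : ℝ) : (w.measure {s}).toReal = jmp w s := by
  rw [measure_singleton]
  exact ENNReal.toReal_ofReal (w.jmp_nonneg s)

theorem jmp_le_of_mem_Ioo {a b s : ℝ} (hs : s ∈ Ioo a b) : jmp w s ≤ leftLim w b - w a := by
  have := w.mono.le_leftLim hs.1
  have := w.mono.le_leftLim hs.2
  rw [jmp]
  linarith

theorem summable_indicator_jmp {S : Set ℝ} (hS : w.measure S ≠ ∞) :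
    Summable (S.indicator (jmp w)) := by
  rw [← summable_subtype_iff_indicator]
  simpa only [Function.comp_def, toReal_measure_singleton] using
    ENNReal.summable_toReal (ne_top_of_le_ne_top hS (tsum_measure_singleton_le w.measure S))

theorem tsum_indicator_jmp_le {S : Set ℝ} (hS : w.measure S ≠ ∞) :
    ∑' s, S.indicator (jmp w) s ≤ (w.measure S).toReal := by
  rw [← tsum_subtype]
  simp only [← toReal_measure_singleton]
  rw [← ENNReal.tsum_toReal_eq (fun s => by simp [measure_singleton])]
  exact ENNReal.toReal_mono hS (tsum_measure_singleton_le w.measure S)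

theorem summable_indicator_of_abs_le {S : Set ℝ} (hS : w.measure S ≠ ∞) {g : ℝ → ℝ} {C : ℝ}
    (h : ∀ s ∈ S, |g s| ≤ C * jmp w s) : Summable (S.indicator g) := by
  refine Summable.of_norm_bounded ((w.summable_indicator_jmp hS).mul_left C) fun s => ?_
  by_cases hs : s ∈ S
  · simpa [hs] using h s hs
  · simp [hs]

theorem abs_tsum_indicator_le {S : Set ℝ} (hS : w.measure S ≠ ∞) {g : ℝ → ℝ} {C : ℝ}
    (hC : 0 ≤ C) (h : ∀ s ∈ S, |g s| ≤ C * jmp w s) :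
    |∑' s, S.indicator g s| ≤ C * (w.measure S).toReal := by
  have hbound : ∀ s, |S.indicator g s| ≤ C * S.indicator (jmp w) s := fun s => by
    by_cases hs : s ∈ S
    · simpa [hs] using h s hs
    · simp [hs]
  have habs := summable_abs_iff.2 (w.summable_indicator_of_abs_le hS h)
  calc |∑' s, S.indicator g s|
      ≤ ∑' s, |S.indicator g s| := by
        simpa only [Real.norm_eq_abs] using
          norm_tsum_le_tsum_norm (f := S.indicator g) (by simpa only [Real.norm_eq_abs] using habs)
    _ ≤ ∑' s, C * S.indicator (jmp w) s :=
        habs.tsum_le_tsum hbound ((w.summable_indicator_jmp hS).mul_left C)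
    _ ≤ C * (w.measure S).toReal := by
        rw [tsum_mul_left]
        exact mul_le_mul_of_nonneg_left (w.tsum_indicator_jmp_le hS) hC

variable {g : ℝ → ℝ} {a b : ℝ}

theorem setIntegral_Ioc_eq (hg : IntegrableOn g (Ioc a b) w.measure) (hab : a < b) :
    ∫ s in Ioc a b, g s ∂w.measure = ∫ s in Ioo a b, g s ∂w.measure + jmp w b * g b := by
  rw [← Ioo_union_right hab] at hg ⊢
  rw [setIntegral_union (by simp) (measurableSet_singleton b) (hg.mono_set subset_union_left)
    (hg.mono_set subset_union_right), Measure.restrict_singleton, integral_smul_measure,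
    integral_dirac, smul_eq_mul, toReal_measure_singleton]

theorem abs_setIntegral_Ioo_sub_le (hg : IntegrableOn g (Ioo a b) w.measure) (hab : a < b)
    {c ε : ℝ} (h : ∀ s ∈ Ioo a b, |g s - c| ≤ ε) :
    |∫ s in Ioo a b, g s ∂w.measure - c * (leftLim w b - w a)| ≤ ε * (leftLim w b - w a) := by
  have hfin : w.measure (Ioo a b) < ∞ := measure_Ioo_lt_top
  have hmeas : w.measure.real (Ioo a b) = leftLim w b - w a := by
    rw [measureReal_def, measure_Ioo, ENNReal.toReal_ofReal (sub_nonneg.2 (w.mono.le_leftLim hab))]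
  have hconst : ∫ _ in Ioo a b, c ∂w.measure = c * (leftLim w b - w a) := by
    rw [setIntegral_const, hmeas, smul_eq_mul, mul_comm]
  rw [← hconst, ← integral_sub hg (integrableOn_const hfin.ne), ← hmeas]
  exact norm_setIntegral_le_of_norm_le_const (f := fun s => g s - c) hfin h

/-- Real induction along `[a₀, t]`: the supremum of `{x | g a₀ ≤ g x}` is attained because `w`
has a left limit there, and it cannot lie below `t` because `w` is right-continuous. -/
theorem le_of_forall_leftLim_sub_le {g : ℝ → ℝ} {a₀ t δ : ℝ} (hδ : 0 < δ) (ht : a₀ ≤ t)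
    (h : ∀ a b, a₀ ≤ a → a < b → b ≤ t → leftLim w b - w a ≤ δ → g a ≤ g b) : g a₀ ≤ g t := by
  set S := {x ∈ Icc a₀ t | g a₀ ≤ g x}
  have hS₀ : a₀ ∈ S := ⟨⟨le_rfl, ht⟩, le_rfl⟩
  have hbdd : BddAbove S := ⟨t, fun x hx => hx.1.2⟩
  have hc₀ : a₀ ≤ sSup S := le_csSup hbdd hS₀
  have hct : sSup S ≤ t := csSup_le ⟨a₀, hS₀⟩ fun x hx => hx.1.2
  have hcS : sSup S ∈ S := by
    rcases hc₀.eq_or_lt with hc | hc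
    · rwa [← hc]
    obtain ⟨x, hwx, hx⟩ := (((w.mono.tendsto_leftLim _).eventually
      (lt_mem_nhds (sub_lt_self _ hδ))).and (Ioo_mem_nhdsLT hc)).exists
    obtain ⟨a, haS, hxa⟩ := exists_lt_of_lt_csSup ⟨a₀, hS₀⟩ hx.2
    refine ⟨⟨hc₀, hct⟩, haS.2.trans ?_⟩
    rcases (le_csSup hbdd haS).eq_or_lt with hac | hac
    · rw [hac]
    · exact h a _ haS.1.1 hac hct (by linarith [w.mono hxa.le])
  suffices sSup S = t from this ▸ hcS.2
  by_contra hne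
  have hwc : Tendsto w (𝓝[>] (sSup S)) (𝓝 (w (sSup S))) :=
    (w.right_continuous _).mono_left (nhdsWithin_mono _ Ioi_subset_Ici_self)
  obtain ⟨b, hwb, hb⟩ := ((hwc.eventually (gt_mem_nhds (lt_add_of_pos_right _ hδ))).and
    (Ioc_mem_nhdsGT (lt_of_le_of_ne hct hne))).exists
  have hbS : b ∈ S := ⟨⟨hc₀.trans hb.1.le, hb.2⟩, hcS.2.trans
    (h _ b hc₀ hb.1 hb.2 (by linarith [w.mono.leftLim_le (le_refl b)]))⟩
  exact (le_csSup hbdd hbS).not_gt hb.1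

theorem abs_sub_le_of_forall_leftLim_sub_le {φ : ℝ → ℝ} {a₀ t δ C : ℝ} (hδ : 0 < δ)
    (ht : a₀ ≤ t) (h : ∀ a b, a₀ ≤ a → a < b → b ≤ t → leftLim w b - w a ≤ δ →
      |φ b - φ a| ≤ C * (w b - w a)) :
    |φ t - φ a₀| ≤ C * (w t - w a₀) := by
  have h₁ := w.le_of_forall_leftLim_sub_le (g := fun x => C * w x - φ x) hδ ht
    fun a b ha hab hb hosc => by linarith [abs_le.1 (h a b ha hab hb hosc)]
  have h₂ := w.le_of_forall_leftLim_sub_le (g := fun x => C * w x + φ x) hδ ht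
    fun a b ha hab hb hosc => by linarith [abs_le.1 (h a b ha hab hb hosc)]
  rw [abs_le]
  constructor <;> linarith

end

def chainRuleDefect (u v : StieltjesFunction ℝ) (F f : ℝ → ℝ) (a b : ℝ) : ℝ :=
  F ((⇑u - ⇑v) b) - F ((⇑u - ⇑v) a)
    - ∑' s, (Ioc a b).indicator (jumpCorrection F f (⇑u - ⇑v)) s
    - (∫ s in Ioc a b, f ((⇑u - ⇑v) s) ∂u.measure - ∫ s in Ioc a b, f ((⇑u - ⇑v) s) ∂v.measure)

section

variable (u v : StieltjesFunction ℝ) {F f : ℝ → ℝ}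

theorem leftLim_sub (s : ℝ) : leftLim (⇑u - ⇑v) s = leftLim u s - leftLim v s :=
  leftLim_eq_of_tendsto ((u.mono.tendsto_leftLim s).sub (v.mono.tendsto_leftLim s))

theorem leftLim_add (s : ℝ) : leftLim ⇑(u + v) s = leftLim u s + leftLim v s :=
  leftLim_eq_of_tendsto ((u.mono.tendsto_leftLim s).add (v.mono.tendsto_leftLim s))

theorem abs_jmp_sub_le (s : ℝ) : |jmp (⇑u - ⇑v) s| ≤ jmp ⇑(u + v) s := by
  have := u.jmp_nonneg s
  have := v.jmp_nonneg s
  simp only [jmp, leftLim_sub, leftLim_add, Pi.sub_apply, add_apply] at *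
  rw [abs_le]
  constructor <;> linarith

theorem sub_mem_Icc {a b s : ℝ} (hs : s ∈ Icc a b) :
    (⇑u - ⇑v) s ∈ Icc (u a - v b) (u b - v a) := by
  have := u.mono hs.1
  have := u.mono hs.2
  have := v.mono hs.1
  have := v.mono hs.2
  constructor <;> simp only [Pi.sub_apply] <;> linarith

theorem leftLim_sub_mem_Icc {a b s : ℝ} (hs : s ∈ Ioc a b) :
    leftLim (⇑u - ⇑v) s ∈ Icc (u a - v b) (u b - v a) := by
  have := u.mono.le_leftLim hs.1
  have := (u.mono.leftLim_le le_rfl).trans (u.mono hs.2)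
  have := v.mono.le_leftLim hs.1
  have := (v.mono.leftLim_le le_rfl).trans (v.mono hs.2)
  rw [leftLim_sub]
  constructor <;> linarith

theorem abs_sub_sub_le {a b : ℝ} (hab : a ≤ b) :
    |(⇑u - ⇑v) b - (⇑u - ⇑v) a| ≤ (u + v) b - (u + v) a := by
  have := u.mono hab
  have := v.mono hab
  rw [add_apply, add_apply, Pi.sub_apply, Pi.sub_apply, abs_le]
  constructor <;> linarith

theorem abs_leftLim_sub_sub_le {a b : ℝ} (hab : a < b) :
    |leftLim (⇑u - ⇑v) b - (⇑u - ⇑v) a| ≤ leftLim ⇑(u + v) b - (u + v) a := by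
  have := u.mono.le_leftLim hab
  have := v.mono.le_leftLim hab
  rw [leftLim_sub, leftLim_add, add_apply, Pi.sub_apply, abs_le]
  constructor <;> linarith

theorem integrableOn_comp_sub (hf : Continuous f) (μ : Measure ℝ)
    [IsLocallyFiniteMeasure μ] (a b : ℝ) :
    IntegrableOn (fun s => f ((⇑u - ⇑v) s)) (Ioc a b) μ := by
  obtain ⟨M, hM⟩ := isCompact_Icc.exists_bound_of_continuousOn (f := f)
    (s := Icc (u a - v b) (u b - v a)) hf.continuousOn
  refine Measure.integrableOn_of_bounded (M := M) measure_Ioc_lt_top.ne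
    (hf.measurable.comp (u.mono.measurable.sub v.mono.measurable)).aestronglyMeasurable
    ((ae_restrict_iff' measurableSet_Ioc).2 (ae_of_all _ fun s hs => ?_))
  exact hM _ (sub_mem_Icc u v (Ioc_subset_Icc_self hs))

theorem abs_jumpCorrection_le (hF : ∀ z, HasDerivAt F (f z) z) {a b δ ε s : ℝ}
    (hmod : ModulusOn f (Icc (u a - v b) (u b - v a)) δ ε) (hs : s ∈ Ioc a b)
    (hjmp : jmp ⇑(u + v) s ≤ δ) :
    |jumpCorrection F f (⇑u - ⇑v) s| ≤ ε * jmp ⇑(u + v) s := by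
  have hq := sub_mem_Icc u v (Ioc_subset_Icc_self hs)
  have hε := hmod.nonneg ((jmp_nonneg _ s).trans hjmp) hq
  exact (hmod.abs_sub_sub_mul_le hF (leftLim_sub_mem_Icc u v hs) hq
    ((abs_jmp_sub_le u v s).trans hjmp) (Or.inr rfl)).trans
    (mul_le_mul_of_nonneg_left (abs_jmp_sub_le u v s) hε)

theorem summable_indicator_jumpCorrection (hf : Continuous f) (hF : ∀ z, HasDerivAt F (f z) z)
    (a b : ℝ) : Summable ((Ioc a b).indicator (jumpCorrection F f (⇑u - ⇑v))) := by
  obtain ⟨M, hM⟩ := isCompact_Icc.exists_bound_of_continuousOn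
    (s := Icc (u a - v b) (u b - v a)) hf.continuousOn
  exact (u + v).summable_indicator_of_abs_le measure_Ioc_lt_top.ne fun s hs =>
    abs_jumpCorrection_le u v hF (ModulusOn.of_abs_le hM) hs le_rfl

theorem chainRuleDefect_self (a : ℝ) : chainRuleDefect u v F f a a = 0 := by
  simp [chainRuleDefect]

theorem chainRuleDefect_add (hf : Continuous f) (hF : ∀ z, HasDerivAt F (f z) z) {a b c : ℝ}
    (hab : a ≤ b) (hbc : b ≤ c) :
    chainRuleDefect u v F f a c = chainRuleDefect u v F f a b + chainRuleDefect u v F f b c := by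
  have hunion := Ioc_union_Ioc_eq_Ioc hab hbc
  have hdisj : Disjoint (Ioc a b) (Ioc b c) := Ioc_disjoint_Ioc_of_le le_rfl
  have hint (μ : Measure ℝ) [IsLocallyFiniteMeasure μ] :
      ∫ s in Ioc a c, f ((⇑u - ⇑v) s) ∂μ =
        ∫ s in Ioc a b, f ((⇑u - ⇑v) s) ∂μ + ∫ s in Ioc b c, f ((⇑u - ⇑v) s) ∂μ := by
    rw [← hunion, setIntegral_union hdisj measurableSet_Ioc
      (integrableOn_comp_sub u v hf μ a b) (integrableOn_comp_sub u v hf μ b c)]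
  have hjumps : ∑' s, (Ioc a c).indicator (jumpCorrection F f (⇑u - ⇑v)) s =
      ∑' s, (Ioc a b).indicator (jumpCorrection F f (⇑u - ⇑v)) s +
        ∑' s, (Ioc b c).indicator (jumpCorrection F f (⇑u - ⇑v)) s := by
    rw [← hunion, indicator_union_of_disjoint hdisj, Summable.tsum_add
      (summable_indicator_jumpCorrection u v hf hF a b)
      (summable_indicator_jumpCorrection u v hf hF b c)]
  rw [chainRuleDefect, chainRuleDefect, chainRuleDefect, hint u.measure, hint v.measure, hjumps]
  ring

theorem abs_chainRuleDefect_le (hf : Continuous f) (hF : ∀ z, HasDerivAt F (f z) z)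
    {a b δ ε : ℝ} (hab : a < b) (hmod : ModulusOn f (Icc (u a - v b) (u b - v a)) δ ε)
    (hosc : leftLim ⇑(u + v) b - (u + v) a ≤ δ) :
    |chainRuleDefect u v F f a b| ≤ 3 * ε * ((u + v) b - (u + v) a) := by
  set G := jumpCorrection F f (⇑u - ⇑v)
  have hya := sub_mem_Icc u v (left_mem_Icc.2 hab.le)
  have hwab := (u + v).mono.le_leftLim hab
  have hwb := (u + v).mono.leftLim_le (le_refl b)
  have hε : 0 ≤ ε := hmod.nonneg (by linarith) hya
  have hclose : ∀ s ∈ Ioo a b, |f ((⇑u - ⇑v) s) - f ((⇑u - ⇑v) a)| ≤ ε := fun s hs =>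
    hmod _ (sub_mem_Icc u v (Ioo_subset_Icc_self hs)) _ hya
      ((abs_sub_sub_le u v hs.1.le).trans (by linarith [(u + v).mono.le_leftLim hs.2]))
  have hint (w : StieltjesFunction ℝ) := (integrableOn_comp_sub u v hf w.measure a b)
  have hG : ∀ s ∈ Ioo a b, |G s| ≤ ε * jmp ⇑(u + v) s := fun s hs =>
    abs_jumpCorrection_le u v hF hmod (Ioo_subset_Ioc_self hs)
      (((u + v).jmp_le_of_mem_Ioo hs).trans hosc)
  have hsum_Ioo : |∑' s, (Ioo a b).indicator G s| ≤ ε * (leftLim ⇑(u + v) b - (u + v) a) := by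
    have := (u + v).abs_tsum_indicator_le measure_Ioo_lt_top.ne hε hG
    rwa [measure_Ioo, ENNReal.toReal_ofReal (sub_nonneg.2 hwab)] at this
  have hsum_Ioc : ∑' s, (Ioc a b).indicator G s = ∑' s, (Ioo a b).indicator G s + G b := by
    rw [← Ioo_union_right hab, indicator_union_of_disjoint (by simp), indicator_singleton]
    exact ((u + v).summable_indicator_of_abs_le measure_Ioo_lt_top.ne hG).tsum_add
      (hasSum_pi_single b (G b)).summable |>.trans (by rw [tsum_pi_single])
  have hu := u.abs_setIntegral_Ioo_sub_le ((hint u).mono_set Ioo_subset_Ioc_self) hab hclose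
  have hv := v.abs_setIntegral_Ioo_sub_le ((hint v).mono_set Ioo_subset_Ioc_self) hab hclose
  have htaylor := hmod.abs_sub_sub_mul_le hF hya (leftLim_sub_mem_Icc u v (right_mem_Ioc.2 hab))
    ((abs_leftLim_sub_sub_le u v hab).trans hosc) (Or.inl rfl)
  -- Once the jump at `b` is split off, each bracket is a first-order error along `(a, b)`,
  -- where `u - v` stays `δ`-close to its value at `a`.
  have hdecomp : chainRuleDefect u v F f a b =
      (F (leftLim (⇑u - ⇑v) b) - F ((⇑u - ⇑v) a)
        - f ((⇑u - ⇑v) a) * (leftLim (⇑u - ⇑v) b - (⇑u - ⇑v) a))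
      - (∫ s in Ioo a b, f ((⇑u - ⇑v) s) ∂u.measure - f ((⇑u - ⇑v) a) * (leftLim u b - u a))
      + (∫ s in Ioo a b, f ((⇑u - ⇑v) s) ∂v.measure - f ((⇑u - ⇑v) a) * (leftLim v b - v a))
      - ∑' s, (Ioo a b).indicator G s := by
    rw [chainRuleDefect, hsum_Ioc, u.setIntegral_Ioc_eq (hint u) hab,
      v.setIntegral_Ioc_eq (hint v) hab]
    simp only [G, jumpCorrection, jmp, leftLim_sub, Pi.sub_apply]
    ring
  have := mul_le_mul_of_nonneg_left (abs_leftLim_sub_sub_le u v hab) hε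
  have := mul_le_mul_of_nonneg_left hwb hε
  simp only [leftLim_add, add_apply] at *
  rw [hdecomp, abs_le]
  constructor <;> linarith [abs_le.1 htaylor, abs_le.1 hu, abs_le.1 hv, abs_le.1 hsum_Ioo]

theorem chainRuleDefect_eq_zero (hf : Continuous f) (hF : ∀ z, HasDerivAt F (f z) z) {t : ℝ}
    (ht : 0 ≤ t) : chainRuleDefect u v F f 0 t = 0 := by
  have hbound : ∀ ε > 0, |chainRuleDefect u v F f 0 t| ≤ 3 * ε * ((u + v) t - (u + v) 0) := by
    intro ε hε
    obtain ⟨δ, hδ, hmod⟩ := hf.exists_modulusOn_Icc (u 0 - v t) (u t - v 0) hε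
    simpa [chainRuleDefect_self] using (u + v).abs_sub_le_of_forall_leftLim_sub_le
      (φ := chainRuleDefect u v F f 0) hδ ht fun a b ha hab hb hosc => by
        rw [chainRuleDefect_add u v hf hF ha hab.le, add_sub_cancel_left]
        exact abs_chainRuleDefect_le u v hf hF hab (hmod.mono (Icc_subset_Icc
          (sub_le_sub (u.mono ha) (v.mono hb)) (sub_le_sub (u.mono hb) (v.mono ha)))) hosc
  have hlim : Tendsto (fun ε => 3 * ε * ((u + v) t - (u + v) 0)) (𝓝[>] 0) (𝓝 0) :=
    tendsto_nhdsWithin_of_tendsto_nhds ((by fun_prop : Continuous fun ε : ℝ =>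
      3 * ε * ((u + v) t - (u + v) 0)).tendsto' 0 0 (by simp))
  exact abs_nonpos_iff.1 (ge_of_tendsto hlim (eventually_nhdsWithin_of_forall hbound))

end

end StieltjesFunction

namespace IsBVDecompOn

variable {y : ℝ → ℝ} {p : StieltjesFunction ℝ × StieltjesFunction ℝ}

theorem leftLim_eq (hp : IsBVDecompOn y p) {s : ℝ} (hs : 0 < s) :
    leftLim y s = leftLim (⇑p.1 - ⇑p.2) s := by
  rw [StieltjesFunction.leftLim_sub]
  refine leftLim_eq_of_tendsto (((p.1.mono.tendsto_leftLim s).sub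
    (p.2.mono.tendsto_leftLim s)).congr' ?_)
  filter_upwards [Ioo_mem_nhdsLT hs] with x hx using (hp x hx.1.le).symm

theorem jumpCorrection_eq (hp : IsBVDecompOn y p) (F f : ℝ → ℝ) {s : ℝ} (hs : 0 < s) :
    jumpCorrection F f y s = jumpCorrection F f (⇑p.1 - ⇑p.2) s := by
  rw [jumpCorrection, jumpCorrection, jmp, jmp, hp.leftLim_eq hs, hp s hs.le, Pi.sub_apply]

theorem summable_jumpCorrection_and_integral_sub_integral_eq (hp : IsBVDecompOn y p)
    {F f : ℝ → ℝ} (hf : Continuous f) (hF : ∀ z, HasDerivAt F (f z) z) {t : ℝ} (ht : 0 ≤ t) :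
    Summable (fun s : Ioc (0:ℝ) t => jumpCorrection F f y s) ∧
      ∫ s in Ioc 0 t, f (y s) ∂p.1.measure - ∫ s in Ioc 0 t, f (y s) ∂p.2.measure =
        F (y t) - F (y 0) - ∑' s : Ioc (0:ℝ) t, jumpCorrection F f y s := by
  have hG : (Ioc 0 t).indicator (jumpCorrection F f y) =
      (Ioc 0 t).indicator (jumpCorrection F f (⇑p.1 - ⇑p.2)) :=
    indicator_congr fun s hs => hp.jumpCorrection_eq F f hs.1
  have hint : EqOn (fun s => f (y s)) (fun s => f ((⇑p.1 - ⇑p.2) s)) (Ioc 0 t) :=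
    fun s hs => congrArg f (hp s hs.1.le)
  refine ⟨(summable_subtype_iff_indicator (f := jumpCorrection F f y) (s := Ioc 0 t)).2 ?_, ?_⟩
  · rw [hG]
    exact StieltjesFunction.summable_indicator_jumpCorrection p.1 p.2 hf hF 0 t
  have := StieltjesFunction.chainRuleDefect_eq_zero p.1 p.2 hf hF ht
  rw [StieltjesFunction.chainRuleDefect] at this
  have hyt : y t = (⇑p.1 - ⇑p.2) t := hp t ht
  have hy0 : y 0 = (⇑p.1 - ⇑p.2) 0 := hp 0 le_rfl
  rw [tsum_subtype, hG, setIntegral_congr_fun measurableSet_Ioc hint,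
    setIntegral_congr_fun measurableSet_Ioc hint, hyt, hy0]
  linear_combination -this

end IsBVDecompOn

theorem statement19_general (y : ℝ → ℝ) (hbv : LocBV y)
    (f f' F : ℝ → ℝ) (hf : ∀ z, HasDerivAt f (f' z) z)
    (hF : ∀ z, HasDerivAt F (f z) z) (t : ℝ) (ht : 0 < t) :
    (Summable fun s : Ioc (0:ℝ) t =>
      |F (y (s : ℝ)) - F (Function.leftLim y (s : ℝ)) - f (y (s : ℝ)) * jmp y (s : ℝ)|) ∧
    lsInt y (fun s => f (y s)) t =
      F (y t) - F (y 0) -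
        ∑' s : Ioc (0:ℝ) t,
          (F (y (s : ℝ)) - F (Function.leftLim y (s : ℝ)) -
            f (y (s : ℝ)) * jmp y (s : ℝ)) := by
  have hfc : Continuous f := continuous_iff_continuousAt.2 fun z => (hf z).continuousAt
  obtain ⟨hsum, heq⟩ :=
    hbv.choose_spec.summable_jumpCorrection_and_integral_sub_integral_eq hfc hF ht.le
  refine ⟨summable_abs_iff.2 hsum, ?_⟩
  rw [lsInt, dif_pos (show ∃ p, IsBVDecompOn y p from hbv)]
  exact heq

/-- change of variables for the Lebesgue–Stieltjes integral along a càdlàg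
path of locally finite total variation. -/
theorem statement19 (y : ℝ → ℝ) (hy : Cadlag y) (hbv : LocBV y)
    (f f' F : ℝ → ℝ) (hf : ∀ z, HasDerivAt f (f' z) z) (hf' : Continuous f')
    (hF : ∀ z, HasDerivAt F (f z) z) (t : ℝ) (ht : 0 < t) :
    (Summable fun s : Ioc (0:ℝ) t =>
      |F (y (s : ℝ)) - F (Function.leftLim y (s : ℝ)) - f (y (s : ℝ)) * jmp y (s : ℝ)|) ∧
    lsInt y (fun s => f (y s)) t =
      F (y t) - F (y 0) -
        ∑' s : Ioc (0:ℝ) t,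
          (F (y (s : ℝ)) - F (Function.leftLim y (s : ℝ)) -
            f (y (s : ℝ)) * jmp y (s : ℝ)) :=
  statement19_general y hbv f f' F hf hF t ht
end
end
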